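/- arXiv:1703.04576 — 7 statements merged into one kernel-verified Lean document; each statement's English description precedes it below -/
import Mathlib

section
/- Let g and g̃ be non-isomorphic real forms of a complex semisimple Lie algebra g^ℂ, compatible with each other and both compatible with a compact real form u of g^ℂ, with Cartan decompositions g = t ⊕ p and g̃ = t̃ ⊕ p̃ satisfying u = t ⊕ ip = t̃ ⊕ ip̃. If neither g nor g̃ is compact, then t ∩ t̃ ≠ 0. -/
/-!
Suppose `t ∩ t' = 0`. Since `t = g ∩ u` and `t' = g' ∩ u`, the restrictions `s, s'` to the
compact form `u` of the conjugations of `g, g'` are commuting involutive automorphisms of `u`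
without common nonzero fixed vector. So `u = T ⊕ T' ⊕ B`, the joint eigenspaces of `(s, s')` for
the signs `(+,-)`, `(-,+)`, `(-,-)`, with `B` abelian. For the inner product `-κ` the operators
`ad c`, `c ∈ B`, act on `T ⊕ T'` as commuting skew maps with trivial joint kernel, so one of them,
`M = ad c₀`, is injective there. The orthogonal factor `ρ` of the polar decomposition of `M`
(extended by the identity on `ker M = B`) is a polynomial in `M`: it is an isometry fixing `B`,
commuting with `ad B` and swapping `T` and `T'`, which makes it an automorphism of `u` with
`ρ s = s' ρ`. Its complex-linear extension to `L = u ⊕ iu` intertwines the conjugations of `g`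
and `g'`, hence maps `g` onto `g'`, contradicting `g ≇ g'`.
-/

/-- Multiplication by `i`, as an `ℝ`-linear endomorphism of a complex vector space. -/
def mulI (E : Type*) [AddCommGroup E] [Module ℝ E] [Module ℂ E]
    [IsScalarTower ℝ ℂ E] : E →ₗ[ℝ] E where
  toFun x := Complex.I • x
  map_add' x y := smul_add _ x y
  map_smul' r x := by
    dsimp only [RingHom.id_apply]
    exact (smul_comm r Complex.I x).symm

open Polynomial
open scoped RealInnerProductSpace

section LinearAlgebra

variable {K V : Type*} [Field K] [Infinite K] [AddCommGroup V] [Module K V] [FiniteDimensional K V]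

theorem exists_ne_zero_injective_add_smul {A : Module.End K V} (hA : Function.Injective A)
    (B : Module.End K V) : ∃ t : K, t ≠ 0 ∧ Function.Injective (A + t • B) := by
  set e := LinearEquiv.ofInjectiveEndo A hA
  set C : Module.End K V := e.symm.toLinearMap ∘ₗ B
  have hAC : ∀ x, A (C x) = B x := fun x => e.apply_symm_apply (B x)
  -- `A + t • B = A (1 + t • C)` is injective unless `-t⁻¹` is an eigenvalue of `C = A⁻¹ B`
  obtain ⟨t, ht⟩ := (((Module.End.finite_hasEigenvalue C).image fun μ => -μ⁻¹).insert 0)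
    |>.infinite_compl.nonempty
  simp only [Set.mem_compl_iff, Set.mem_insert_iff, Set.mem_image, Set.mem_ofPred_eq, not_or,
    not_exists, not_and] at ht
  refine ⟨t, ht.1, (injective_iff_map_eq_zero _).2 fun x hx => ?_⟩
  by_contra hx0
  have hsum : x + t • C x = 0 := hA (by simpa [hAC] using hx)
  have hCx : C x = (-t⁻¹) • x :=
    calc C x = t⁻¹ • (t • C x) := by rw [smul_smul, inv_mul_cancel₀ ht.1, one_smul]
      _ = (-t⁻¹) • x := by rw [eq_neg_of_add_eq_zero_right hsum, smul_neg, neg_smul]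
  exact ht.2 _ (Module.End.hasEigenvalue_of_hasEigenvector
    ⟨Module.End.mem_eigenspace_iff.2 hCx, hx0⟩) (by rw [inv_neg, inv_inv, neg_neg])

end LinearAlgebra

section InnerProduct

variable {E : Type*} [NormedAddCommGroup E] [InnerProductSpace ℝ E]

theorem LinearMap.IsSymmetric.aeval {S : Module.End ℝ E} (hS : S.IsSymmetric) (p : ℝ[X]) :
    (Polynomial.aeval S p).IsSymmetric := by
  induction p using Polynomial.induction_on' with
  | add p q hp hq => rw [map_add]; exact hp.add hq
  | monomial n a =>
    rw [aeval_monomial, ← Algebra.smul_def]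
    exact (hS.pow n).smul (conj_trivial a)

theorem isSymmetric_mul_self_of_skew {M : Module.End ℝ E} (hM : ∀ x y, ⟪M x, y⟫ = -⟪x, M y⟫) :
    (M * M).IsSymmetric := fun x y => by
  rw [Module.End.mul_apply, Module.End.mul_apply, hM, hM, neg_neg]

theorem nonpos_of_hasEigenvalue_mul_self_of_skew {M : Module.End ℝ E}
    (hM : ∀ x y, ⟪M x, y⟫ = -⟪x, M y⟫) {μ : ℝ} (hμ : (M * M).HasEigenvalue μ) : μ ≤ 0 := by
  obtain ⟨v, hv⟩ := hμ.exists_hasEigenvector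
  have h : ⟪(M * M) v, v⟫ = ⟪μ • v, v⟫ := by rw [Module.End.mem_eigenspace_iff.1 hv.1]
  rw [Module.End.mul_apply, hM, real_inner_smul_left] at h
  nlinarith [real_inner_self_nonneg (x := M v), real_inner_self_pos.2 hv.2]

variable [FiniteDimensional ℝ E]

section CommutingSkew

variable {F : Type*} [AddCommGroup F] [Module ℝ F] {φ : F →ₗ[ℝ] Module.End ℝ E}

theorem exists_ker_lt_of_commute_of_skew (hskew : ∀ c x y, ⟪φ c x, y⟫ = -⟪x, φ c y⟫)
    (hcomm : ∀ c d, Commute (φ c) (φ d)) {c d : F} {x₀ : E} (hcx₀ : φ c x₀ = 0)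
    (hdx₀ : φ d x₀ ≠ 0) : ∃ c', LinearMap.ker (φ c') < LinearMap.ker (φ c) := by
  set N := LinearMap.ker (φ c)
  have hdN : ∀ n ∈ N, φ d n ∈ N := fun n hn => by
    rw [LinearMap.mem_ker, ← Module.End.mul_apply, (hcomm c d).eq, Module.End.mul_apply,
      LinearMap.mem_ker.1 hn, map_zero]
  have hperp : ∀ e, (∀ n ∈ N, φ e n ∈ N) → ∀ v ∈ Nᗮ, φ e v ∈ Nᗮ := fun e he v hv =>
    (Submodule.mem_orthogonal _ _).2 fun n hn => by
      rw [← neg_eq_zero, ← hskew]; exact Submodule.inner_right_of_mem_orthogonal (he n hn) hv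
  have hcN : ∀ n ∈ N, φ c n ∈ N := fun n hn => by rw [LinearMap.mem_ker.1 hn]; exact N.zero_mem
  have hcinj : Function.Injective ((φ c).restrict (hperp c hcN)) := by
    refine (injective_iff_map_eq_zero _).2 fun v hv => Subtype.ext ?_
    have hvN : (v : E) ∈ N := congrArg Subtype.val hv
    exact Submodule.disjoint_def.1 N.orthogonal_disjoint _ hvN v.2
  -- for suitable `t ≠ 0` the kernel of `φ (c + t • d)` is `N ∩ ker (φ d)`, which misses `x₀`
  obtain ⟨t, ht, htinj⟩ := exists_ne_zero_injective_add_smul hcinj ((φ d).restrict (hperp d hdN))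
  have hker : ∀ x ∈ LinearMap.ker (φ (c + t • d)), x ∈ N ∧ φ d x = 0 := by
    intro x hx
    obtain ⟨n, hn, v, hv, rfl⟩ := N.exists_add_mem_mem_orthogonal x
    have hsplit : t • φ d n + (φ c v + t • φ d v) = 0 := by
      rw [← LinearMap.mem_ker.1 hx]
      simp only [map_add, map_smul, LinearMap.add_apply, LinearMap.smul_apply,
        LinearMap.mem_ker.1 hn]
      module
    have hdn : t • φ d n = 0 := Submodule.disjoint_def.1 N.orthogonal_disjoint _
      (N.smul_mem t (hdN n hn)) (by
        rw [eq_neg_of_add_eq_zero_left hsplit]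
        exact neg_mem (add_mem (hperp c hcN v hv) (Submodule.smul_mem _ t (hperp d hdN v hv))))
    have hv0 : v = 0 := by
      rw [hdn, zero_add] at hsplit
      exact congrArg Subtype.val
        (htinj (a₁ := ⟨v, hv⟩) (a₂ := 0) (Subtype.ext (by simpa using hsplit)))
    subst hv0
    exact ⟨by simpa using hn, by simpa using (smul_eq_zero.1 hdn).resolve_left ht⟩
  refine ⟨c + t • d, SetLike.lt_iff_le_and_exists.2
    ⟨fun x hx => (hker x hx).1, x₀, hcx₀, fun hx₀ => hdx₀ (hker x₀ hx₀).2⟩⟩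

theorem exists_injective_of_commute_of_skew (hskew : ∀ c x y, ⟪φ c x, y⟫ = -⟪x, φ c y⟫)
    (hcomm : ∀ c d, Commute (φ c) (φ d)) (hker : ∀ x, (∀ c, φ c x = 0) → x = 0) :
    ∃ c, Function.Injective (φ c) := by
  obtain ⟨_, ⟨c, rfl⟩, hmin⟩ := (wellFounded_lt (α := Submodule ℝ E)).has_min
    (Set.range fun c => LinearMap.ker (φ c)) ⟨_, 0, rfl⟩
  refine ⟨c, LinearMap.ker_eq_bot.1 ((Submodule.eq_bot_iff _).2 fun x₀ hx₀ => ?_)⟩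
  by_contra hx₀ne
  obtain ⟨d, hd⟩ := not_forall.1 (mt (hker x₀) hx₀ne)
  obtain ⟨c', hc'⟩ := exists_ker_lt_of_commute_of_skew hskew hcomm hx₀ hd
  exact hmin _ ⟨c', rfl⟩ hc'

end CommutingSkew

theorem LinearMap.IsSymmetric.aeval_eq_zero {S : Module.End ℝ E} (hS : S.IsSymmetric) {p : ℝ[X]}
    (hp : ∀ μ, S.HasEigenvalue μ → p.eval μ = 0) : Polynomial.aeval S p = 0 := by
  refine (hS.eigenvectorBasis rfl).toBasis.ext fun i => ?_
  have hi := hS.hasEigenvector_eigenvectorBasis rfl i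
  rw [OrthonormalBasis.coe_toBasis, Module.End.aeval_apply_of_hasEigenvector hi,
    hp _ (Module.End.hasEigenvalue_of_hasEigenvector hi), zero_smul, LinearMap.zero_apply]

theorem exists_polar_polynomials_of_isSymmetric {S : Module.End ℝ E} (hS : S.IsSymmetric)
    (hS_nonpos : ∀ μ, S.HasEigenvalue μ → μ ≤ 0) :
    ∃ q p : ℝ[X], p.eval 0 = 1 ∧ Polynomial.aeval S (p * X * p) = 0 ∧
      Polynomial.aeval S (p * p - q * X * q) = 1 := by
  classical
  set nodes : Finset ℝ := insert 0 (Module.End.finite_hasEigenvalue S).toFinset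
  have hmem : ∀ μ, S.HasEigenvalue μ → μ ∈ nodes := fun μ hμ =>
    Finset.mem_insert_of_mem ((Set.Finite.mem_toFinset _).2 hμ)
  set q := Lagrange.interpolate nodes id fun μ => (√(-μ))⁻¹
  set p := Lagrange.interpolate nodes id fun μ => if μ = 0 then (1 : ℝ) else 0
  have hq : ∀ μ ∈ nodes, q.eval μ = (√(-μ))⁻¹ := fun μ hμ =>
    Lagrange.eval_interpolate_at_node _ (Set.injOn_id _) hμ
  have hp : ∀ μ ∈ nodes, p.eval μ = if μ = 0 then 1 else 0 := fun μ hμ =>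
    Lagrange.eval_interpolate_at_node _ (Set.injOn_id _) hμ
  refine ⟨q, p, by simpa using hp 0 (Finset.mem_insert_self _ _), ?_, ?_⟩
  · refine hS.aeval_eq_zero fun μ hμ => ?_
    rw [eval_mul, eval_mul, eval_X, hp μ (hmem μ hμ)]
    split_ifs with h0 <;> simp [h0]
  · have hvan : Polynomial.aeval S (p * p - q * X * q - 1) = 0 := hS.aeval_eq_zero fun μ hμ => by
      rw [eval_sub, eval_sub, eval_mul, eval_mul, eval_mul, eval_X, eval_one, hq μ (hmem μ hμ),
        hp μ (hmem μ hμ)]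
      split_ifs with h0
      · simp [h0]
      · have hneg : 0 < -μ := neg_pos.2 (lt_of_le_of_ne (hS_nonpos μ hμ) h0)
        have hsq := Real.sq_sqrt hneg.le
        have hsqrt := Real.sqrt_pos.2 hneg
        field_simp
        linarith
    rwa [map_sub, map_one, sub_eq_zero] at hvan

/-- `M q(M²) + p(M²)` is the orthogonal factor of the polar decomposition of `M`, extended by the
identity on `ker M`. -/
theorem exists_polar_polynomials_of_skew {M : Module.End ℝ E}
    (hM : ∀ x y, ⟪M x, y⟫ = -⟪x, M y⟫) :
    ∃ q p : ℝ[X], p.eval 0 = 1 ∧ (∀ x, M (aeval (M * M) p x) = 0) ∧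
      ∀ x y, ⟪M (aeval (M * M) q x) + aeval (M * M) p x,
        M (aeval (M * M) q y) + aeval (M * M) p y⟫ = ⟪x, y⟫ := by
  have hS := isSymmetric_mul_self_of_skew hM
  obtain ⟨q, p, hp0, hpXp, hone⟩ :=
    exists_polar_polynomials_of_isSymmetric hS fun μ => nonpos_of_hasEigenvalue_mul_self_of_skew hM
  set P := aeval (M * M) p
  set Q := aeval (M * M) q
  have hPMMP : ∀ x, P ((M * M) (P x)) = 0 := fun x => by
    have h := LinearMap.congr_fun hpXp x
    rwa [map_mul, map_mul, aeval_X] at h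
  have hMP : ∀ x, M (P x) = 0 := fun x => by
    rw [← inner_self_eq_zero (𝕜 := ℝ), hM, ← Module.End.mul_apply M M, hS.aeval p, hPMMP,
      inner_zero_right, neg_zero]
  refine ⟨q, p, hp0, hMP, fun x y => ?_⟩
  have horth : ∀ a b, ⟪M (Q a), P b⟫ = 0 := fun a b => by rw [hM, hMP, inner_zero_right, neg_zero]
  calc ⟪M (Q x) + P x, M (Q y) + P y⟫ = ⟪M (Q x), M (Q y)⟫ + ⟪P x, P y⟫ := by
        rw [inner_add_left, inner_add_right, inner_add_right, horth, ← real_inner_comm (P x),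
          horth]
        ring
    _ = ⟪x, aeval (M * M) (p * p - q * X * q) y⟫ := by
        simp only [map_sub, map_mul, aeval_X, LinearMap.sub_apply, Module.End.mul_apply,
          inner_sub_right]
        rw [hM, hS.aeval q, hS.aeval p]
        ring
    _ = ⟪x, y⟫ := by rw [hone, Module.End.one_apply]

theorem exists_polar_isometry_of_skew {M : Module.End ℝ E} (hM : ∀ x y, ⟪M x, y⟫ = -⟪x, M y⟫) :
    ∃ ρ : Module.End ℝ E, (∀ x y, ⟪ρ x, ρ y⟫ = ⟪x, y⟫) ∧ (∀ x, M x = 0 → ρ x = x) ∧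
      (∀ N, Commute M N → Commute ρ N) ∧
      ∀ V V' : Submodule ℝ E, Disjoint V (LinearMap.ker M) → (∀ x ∈ V, M x ∈ V') →
        (∀ x ∈ V', M x ∈ V) → ∀ x ∈ V, ρ x ∈ V' := by
  obtain ⟨q, p, hp0, hMP, hiso⟩ := exists_polar_polynomials_of_skew hM
  refine ⟨M * aeval (M * M) q + aeval (M * M) p, hiso, fun x hx => ?_, fun N hN => ?_,
    fun V V' hV hMV hMV' x hx => ?_⟩
  · have hMMx : (M * M) x = (0 : ℝ) • x := by rw [Module.End.mul_apply, hx, map_zero, zero_smul]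
    rw [LinearMap.add_apply, Module.End.mul_apply,
      Module.End.aeval_apply_of_mem_apply_eq_smul hMMx,
      Module.End.aeval_apply_of_mem_apply_eq_smul hMMx, map_smul, hx, smul_zero, hp0, one_smul,
      zero_add]
  · have hpoly : ∀ r : ℝ[X], Commute N (aeval (M * M) r) := fun r =>
      Algebra.commute_of_mem_adjoin_singleton_of_commute (aeval_mem_adjoin_singleton ℝ _)
        (hN.symm.mul_right hN.symm)
    exact ((hN.symm.mul_right (hpoly q)).add_right (hpoly p)).symm
  · -- the even part `p(M²)` maps into `ker M`, which meets `V` trivially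
    have hMM : V ≤ V.comap (M * M) := fun y hy => hMV' _ (hMV y hy)
    have hPx : aeval (M * M) p x = 0 := Submodule.disjoint_def.1 hV _
      (aeval_apply_smul_mem_of_le_comap hx p _ hMM) (hMP x)
    rw [LinearMap.add_apply, hPx, add_zero]
    exact hMV _ (aeval_apply_smul_mem_of_le_comap hx q _ hMM)

end InnerProduct

section KleinGrading

variable {u : Type*} [LieRing u] [LieAlgebra ℝ u]

def signSpace (s s' : u →ₗ⁅ℝ⁆ u) (a b : ℝ) : Submodule ℝ u :=
  Module.End.eigenspace (s : Module.End ℝ u) a ⊓ Module.End.eigenspace (s' : Module.End ℝ u) b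

variable {s s' : u →ₗ⁅ℝ⁆ u}

theorem mem_signSpace {a b : ℝ} {x : u} :
    x ∈ signSpace s s' a b ↔ s x = a • x ∧ s' x = b • x := by
  simp [signSpace]

theorem mem_signSpace_comm {a b : ℝ} {x : u} :
    x ∈ signSpace s s' a b ↔ x ∈ signSpace s' s b a := by
  simp only [mem_signSpace, and_comm]

theorem lie_mem_signSpace {a b a' b' : ℝ} {x y : u} (hx : x ∈ signSpace s s' a b)
    (hy : y ∈ signSpace s s' a' b') : ⁅x, y⁆ ∈ signSpace s s' (a * a') (b * b') := by
  rw [mem_signSpace] at *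
  simp only [LieHom.map_lie, hx, hy, smul_lie, lie_smul, smul_smul, mul_comm a', mul_comm b',
    and_self]

theorem disjoint_signSpace {a b a' b' : ℝ} (h : a ≠ a' ∨ b ≠ b') :
    Disjoint (signSpace s s' a b) (signSpace s s' a' b') := by
  refine Submodule.disjoint_def.2 fun x hx hx' => ?_
  rw [mem_signSpace] at hx hx'
  have key : ∀ c c' : ℝ, c ≠ c' → c • x = c' • x → x = 0 := fun c c' hc hcx =>
    (smul_eq_zero.1 (by rw [sub_smul, hcx, sub_self])).resolve_left (sub_ne_zero.2 hc)
  rcases h with h | h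
  · exact key a a' h (hx.1.symm.trans hx'.1)
  · exact key b b' h (hx.2.symm.trans hx'.2)

theorem signSpace_one_one (hfix : ∀ x, s x = x → s' x = x → x = 0) : signSpace s s' 1 1 = ⊥ :=
  (Submodule.eq_bot_iff _).2 fun x hx => by
    simp only [mem_signSpace, one_smul] at hx
    exact hfix x hx.1 hx.2

theorem add_smul_mem_signSpace (hs : Function.Involutive s) (hs' : Function.Involutive s')
    (hss' : Function.Commute s s') {a b : ℝ} (ha : a * a = 1) (hb : b * b = 1) (x : u) :
    x + a • s x + b • s' x + (a * b) • s (s' x) ∈ signSpace s s' a b := by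
  have h1 : s' (s x) = s (s' x) := (hss' x).symm
  have h2 : s' (s (s' x)) = s x := by rw [← h1, hs' (s x)]
  rw [mem_signSpace]
  constructor
  · simp only [map_add, map_smul, hs x, hs (s' x)]
    linear_combination (norm := module) ha • (-(s x + b • s (s' x)))
  · simp only [map_add, map_smul, h1, h2, hs' x]
    linear_combination (norm := module) hb • (-(s' x + a • s (s' x)))

theorem signSpace_sup_eq_top (hs : Function.Involutive s) (hs' : Function.Involutive s')
    (hss' : Function.Commute s s') (hfix : ∀ x, s x = x → s' x = x → x = 0) :
    signSpace s s' 1 (-1) ⊔ signSpace s s' (-1) 1 ⊔ signSpace s s' (-1) (-1) = ⊤ := by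
  refine eq_top_iff.2 fun x _ => ?_
  have hmem := fun a b (ha : a * a = 1) (hb : b * b = 1) =>
    add_smul_mem_signSpace hs hs' hss' ha hb x
  have h0 := hmem 1 1 (one_mul 1) (one_mul 1)
  rw [signSpace_one_one hfix, Submodule.mem_bot] at h0
  have hx : x = (4⁻¹ : ℝ) • ((x + (1 : ℝ) • s x + (-1 : ℝ) • s' x + (1 * -1 : ℝ) • s (s' x)) +
      (x + (-1 : ℝ) • s x + (1 : ℝ) • s' x + (-1 * 1 : ℝ) • s (s' x)) +
      (x + (-1 : ℝ) • s x + (-1 : ℝ) • s' x + (-1 * -1 : ℝ) • s (s' x))) := by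
    linear_combination (norm := module) (4⁻¹ : ℝ) • h0
  rw [hx]
  refine Submodule.smul_mem _ _ (add_mem (add_mem ?_ ?_) ?_)
  · exact Submodule.mem_sup_left (Submodule.mem_sup_left (hmem _ _ (by norm_num) (by norm_num)))
  · exact Submodule.mem_sup_left (Submodule.mem_sup_right (hmem _ _ (by norm_num) (by norm_num)))
  · exact Submodule.mem_sup_right (hmem _ _ (by norm_num) (by norm_num))

theorem lie_eq_zero_of_mem_signSpace_neg_neg (hfix : ∀ x, s x = x → s' x = x → x = 0)
    {c c' : u} (hc : c ∈ signSpace s s' (-1) (-1)) (hc' : c' ∈ signSpace s s' (-1) (-1)) :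
    ⁅c, c'⁆ = 0 := by
  simpa [signSpace_one_one hfix] using lie_mem_signSpace hc hc'

theorem lie_mem_signSpace_of_mem_sup (hfix : ∀ x, s x = x → s' x = x → x = 0) {x y : u}
    (hx : x ∈ signSpace s s' 1 (-1) ⊔ signSpace s s' (-1) 1)
    (hy : y ∈ signSpace s s' 1 (-1) ⊔ signSpace s s' (-1) 1) :
    ⁅x, y⁆ ∈ signSpace s s' (-1) (-1) := by
  obtain ⟨a, ha, b, hb, rfl⟩ := Submodule.mem_sup.1 hx
  obtain ⟨a', ha', b', hb', rfl⟩ := Submodule.mem_sup.1 hy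
  have h11 : ∀ {z : u}, z ∈ signSpace s s' 1 1 → z = 0 := fun hz => by
    rwa [signSpace_one_one hfix, Submodule.mem_bot] at hz
  have haa' : ⁅a, a'⁆ = 0 := h11 (by simpa using lie_mem_signSpace ha ha')
  have hbb' : ⁅b, b'⁆ = 0 := h11 (by simpa using lie_mem_signSpace hb hb')
  rw [add_lie, lie_add, lie_add, haa', hbb', zero_add, add_zero]
  exact add_mem (by simpa using lie_mem_signSpace ha hb') (by simpa using lie_mem_signSpace hb ha')

theorem semiconj_of_mapsTo_signSpace (hs : Function.Involutive s)
    (hs' : Function.Involutive s') (hss' : Function.Commute s s')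
    (hfix : ∀ x, s x = x → s' x = x → x = 0) {ρ : Module.End ℝ u}
    (hT : ∀ x ∈ signSpace s s' 1 (-1), ρ x ∈ signSpace s s' (-1) 1)
    (hT' : ∀ x ∈ signSpace s s' (-1) 1, ρ x ∈ signSpace s s' 1 (-1))
    (hB : ∀ x ∈ signSpace s s' (-1) (-1), ρ x ∈ signSpace s s' (-1) (-1)) :
    Function.Semiconj ρ s s' := fun x => by
  -- on each graded piece both sides are `a • ρ x`, where `a` is the eigenvalue of `s`
  have key : ∀ {a b a' b' : ℝ}, a = b' → ∀ y ∈ signSpace s s' a b,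
      ρ y ∈ signSpace s s' a' b' → y ∈ LinearMap.eqLocus (ρ ∘ₗ (s : Module.End ℝ u)) (s' ∘ₗ ρ) := by
    intro a b a' b' hab y hy hρy
    rw [mem_signSpace] at hy hρy
    simp [LinearMap.mem_eqLocus, hy.1, hρy.2, hab]
  have htop := (signSpace_sup_eq_top hs hs' hss' hfix).ge
  exact htop.trans (sup_le (sup_le (fun y hy => key rfl y hy (hT y hy))
    (fun y hy => key rfl y hy (hT' y hy))) (fun y hy => key rfl y hy (hB y hy))) Submodule.mem_top

end KleinGrading

section Compact

variable {u : Type*} [LieRing u] [LieAlgebra ℝ u]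

noncomputable abbrev killingInnerCore (hκ : ∀ x : u, x ≠ 0 → killingForm ℝ u x x < 0) :
    InnerProductSpace.Core ℝ u where
  inner x y := -killingForm ℝ u x y
  conj_inner_symm x y := by simp [LieModule.traceForm_comm ℝ u u x y]
  re_inner_nonneg x := by
    rcases eq_or_ne x 0 with rfl | hx
    · simp
    · simpa using (hκ x hx).le
  add_left x y z := by simp only [map_add, LinearMap.add_apply, neg_add]
  smul_left x y r := by simp
  definite x hx := by
    by_contra h
    have := hκ x h
    simp_all

theorem eq_zero_of_killingForm_self_eq_zero (hκ : ∀ x : u, x ≠ 0 → killingForm ℝ u x x < 0)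
    {x : u} (hx : killingForm ℝ u x x = 0) : x = 0 := by
  by_contra h
  exact (hκ x h).ne hx

theorem eq_zero_of_forall_lie_eq_zero (hκ : ∀ x : u, x ≠ 0 → killingForm ℝ u x x < 0)
    {x : u} (hx : ∀ y : u, ⁅x, y⁆ = 0) : x = 0 := by
  refine eq_zero_of_killingForm_self_eq_zero hκ ?_
  have : LieAlgebra.ad ℝ u x = 0 := LinearMap.ext hx
  rw [killingForm_apply_apply, this, LinearMap.zero_comp, map_zero]

variable {s s' : u →ₗ⁅ℝ⁆ u}

theorem eq_zero_of_mem_signSpace_of_lie_eq_zero (hκ : ∀ x : u, x ≠ 0 → killingForm ℝ u x x < 0)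
    (hs : Function.Involutive s) (hs' : Function.Involutive s') (hss' : Function.Commute s s')
    (hfix : ∀ x, s x = x → s' x = x → x = 0) {a : u} (ha : a ∈ signSpace s s' 1 (-1))
    (h : ∀ c ∈ signSpace s s' (-1) (-1), ⁅c, a⁆ = 0) : a = 0 := by
  have hB : ∀ c ∈ signSpace s s' (-1) (-1), ⁅a, c⁆ = 0 := fun c hc => by
    rw [← lie_skew, h c hc, neg_zero]
  refine eq_zero_of_forall_lie_eq_zero hκ fun y => ?_
  suffices ⊤ ≤ LinearMap.ker (LieAlgebra.ad ℝ u a) from this Submodule.mem_top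
  rw [← signSpace_sup_eq_top hs hs' hss' hfix]
  refine sup_le (sup_le (fun y hy => ?_) (fun y hy => ?_)) hB
  · have := lie_mem_signSpace ha hy
    rw [mul_one, mul_neg_one, neg_neg, signSpace_one_one hfix] at this
    exact this
  · -- `⁅a, y⁆ ∈ B` is Killing-orthogonal to `B`, in particular to itself
    rw [LinearMap.mem_ker, LieAlgebra.ad_apply]
    have hay : ⁅a, y⁆ ∈ signSpace s s' (-1) (-1) := by simpa using lie_mem_signSpace ha hy
    refine eq_zero_of_killingForm_self_eq_zero hκ ?_
    rw [LieModule.traceForm_apply_lie_apply', hB _ hay, map_zero, neg_zero]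

theorem eq_zero_of_mem_sup_signSpace_of_lie_eq_zero
    (hκ : ∀ x : u, x ≠ 0 → killingForm ℝ u x x < 0)
    (hs : Function.Involutive s) (hs' : Function.Involutive s') (hss' : Function.Commute s s')
    (hfix : ∀ x, s x = x → s' x = x → x = 0) {x : u}
    (hx : x ∈ signSpace s s' 1 (-1) ⊔ signSpace s s' (-1) 1)
    (h : ∀ c ∈ signSpace s s' (-1) (-1), ⁅c, x⁆ = 0) : x = 0 := by
  obtain ⟨a, ha, b, hb, rfl⟩ := Submodule.mem_sup.1 hx
  have hsplit : ∀ c ∈ signSpace s s' (-1) (-1), ⁅c, a⁆ = 0 ∧ ⁅c, b⁆ = 0 := fun c hc => by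
    have hca : ⁅c, a⁆ ∈ signSpace s s' (-1) 1 := by simpa using lie_mem_signSpace hc ha
    have hcb : ⁅c, b⁆ ∈ signSpace s s' 1 (-1) := by simpa using lie_mem_signSpace hc hb
    have hab : ⁅c, a⁆ = -⁅c, b⁆ := eq_neg_of_add_eq_zero_left (by rw [← lie_add]; exact h c hc)
    have hca0 : ⁅c, a⁆ = 0 := Submodule.disjoint_def.1
      (disjoint_signSpace (a := -1) (a' := 1) (b := 1) (b' := -1) (Or.inl (by norm_num))) _ hca
      (by rw [hab]; exact neg_mem hcb)
    rw [hca0, eq_comm, neg_eq_zero] at hab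
    exact ⟨hca0, hab⟩
  have ha0 := eq_zero_of_mem_signSpace_of_lie_eq_zero hκ hs hs' hss' hfix ha
    fun c hc => (hsplit c hc).1
  have hb0 := eq_zero_of_mem_signSpace_of_lie_eq_zero hκ hs' hs hss'.symm
    (fun x h₁ h₂ => hfix x h₂ h₁) (mem_signSpace_comm.1 hb)
    fun c hc => (hsplit c (mem_signSpace_comm.1 hc)).2
  rw [ha0, hb0, add_zero]

theorem exists_regular_mem_signSpace [FiniteDimensional ℝ u]
    (hκ : ∀ x : u, x ≠ 0 → killingForm ℝ u x x < 0)
    (hs : Function.Involutive s) (hs' : Function.Involutive s') (hss' : Function.Commute s s')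
    (hfix : ∀ x, s x = x → s' x = x → x = 0) :
    ∃ c₀ ∈ signSpace s s' (-1) (-1), ∀ x ∈ signSpace s s' 1 (-1) ⊔ signSpace s s' (-1) 1,
      ⁅c₀, x⁆ = 0 → x = 0 := by
  let _ : NormedAddCommGroup u := (killingInnerCore hκ).toNormedAddCommGroup
  let _ : InnerProductSpace ℝ u := InnerProductSpace.ofCore (killingInnerCore hκ).toCore
  set B := signSpace s s' (-1) (-1)
  set W := signSpace s s' 1 (-1) ⊔ signSpace s s' (-1) 1
  have hBW : ∀ c ∈ B, W ≤ W.comap (LieAlgebra.ad ℝ u c) := fun c hc =>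
    sup_le (fun x hx => Submodule.mem_sup_right (by simpa using lie_mem_signSpace hc hx))
      (fun x hx => Submodule.mem_sup_left (by simpa using lie_mem_signSpace hc hx))
  let φ : B →ₗ[ℝ] Module.End ℝ W :=
    { toFun := fun c => (LieAlgebra.ad ℝ u c).restrict (hBW c c.2)
      map_add' := fun c d => by ext; simp
      map_smul' := fun r c => by ext; simp }
  have hskew : ∀ c x y, ⟪φ c x, y⟫ = -⟪x, φ c y⟫ := fun c x y => by
    show -killingForm ℝ u ⁅(c : u), (x : u)⁆ y = -(-killingForm ℝ u x ⁅(c : u), (y : u)⁆)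
    rw [LieModule.traceForm_apply_lie_apply']
  have hcomm : ∀ c d, Commute (φ c) (φ d) := fun c d => LinearMap.ext fun x => Subtype.ext <| by
    show ⁅(c : u), ⁅(d : u), (x : u)⁆⁆ = ⁅(d : u), ⁅(c : u), (x : u)⁆⁆
    rw [leibniz_lie, lie_eq_zero_of_mem_signSpace_neg_neg hfix c.2 d.2, zero_lie, zero_add]
  have hker : ∀ x, (∀ c, φ c x = 0) → x = 0 := fun x hx => Subtype.ext <|
    eq_zero_of_mem_sup_signSpace_of_lie_eq_zero hκ hs hs' hss' hfix x.2
      fun c hc => congrArg Subtype.val (hx ⟨c, hc⟩)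
  obtain ⟨c, hc⟩ := exists_injective_of_commute_of_skew hskew hcomm hker
  refine ⟨c, c.2, fun x hx h0 => congrArg Subtype.val (hc (a₁ := ⟨x, hx⟩) (a₂ := 0) ?_)⟩
  exact Subtype.ext (by simpa [φ] using h0)

theorem map_lie_of_preserves_killingForm (hκ : ∀ x : u, x ≠ 0 → killingForm ℝ u x x < 0)
    {W B : Submodule ℝ u} (hWB : W ⊔ B = ⊤) (hWW : ∀ x ∈ W, ∀ y ∈ W, ⁅x, y⁆ ∈ B)
    {ρ : Module.End ℝ u} (hρW : ∀ x ∈ W, ρ x ∈ W) (hρB : ∀ c ∈ B, ρ c = c)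
    (hρad : ∀ c ∈ B, ∀ x, ρ ⁅c, x⁆ = ⁅c, ρ x⁆)
    (hρκ : ∀ x y, killingForm ℝ u (ρ x) (ρ y) = killingForm ℝ u x y) (x y : u) :
    ρ ⁅x, y⁆ = ⁅ρ x, ρ y⁆ := by
  have hBx : ∀ c ∈ B, ∀ x, ρ ⁅c, x⁆ = ⁅ρ c, ρ x⁆ := fun c hc x => by rw [hρB c hc, hρad c hc]
  have hxB : ∀ c ∈ B, ∀ x, ρ ⁅x, c⁆ = ⁅ρ x, ρ c⁆ := fun c hc x => by
    rw [← lie_skew, map_neg, hBx c hc, lie_skew]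
  -- on `W` both sides lie in `B` and have the same Killing pairing with `B`
  have hWW' : ∀ w ∈ W, ∀ w' ∈ W, ρ ⁅w, w'⁆ = ⁅ρ w, ρ w'⁆ := by
    intro w hw w' hw'
    rw [hρB _ (hWW w hw w' hw')]
    have hd : ⁅ρ w, ρ w'⁆ - ⁅w, w'⁆ ∈ B :=
      sub_mem (hWW _ (hρW w hw) _ (hρW w' hw')) (hWW w hw w' hw')
    have horth : ∀ c ∈ B, killingForm ℝ u (⁅ρ w, ρ w'⁆ - ⁅w, w'⁆) c = 0 := fun c hc => by
      have hρc : ⁅ρ w', c⁆ = ρ ⁅w', c⁆ := by rw [hxB c hc, hρB c hc]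
      rw [map_sub, LinearMap.sub_apply, LieModule.traceForm_apply_lie_apply,
        LieModule.traceForm_apply_lie_apply, hρc, hρκ, sub_self]
    exact (sub_eq_zero.1 (eq_zero_of_killingForm_self_eq_zero hκ (horth _ hd))).symm
  obtain ⟨w, hw, c, hc, rfl⟩ := Submodule.mem_sup.1 (hWB ▸ Submodule.mem_top : x ∈ W ⊔ B)
  obtain ⟨w', hw', c', hc', rfl⟩ := Submodule.mem_sup.1 (hWB ▸ Submodule.mem_top : y ∈ W ⊔ B)
  calc ρ ⁅w + c, w' + c'⁆ = ρ ⁅w, w'⁆ + ρ ⁅w, c'⁆ + ρ ⁅c, w' + c'⁆ := by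
        rw [add_lie, lie_add, map_add, map_add]
    _ = ⁅ρ w, ρ w'⁆ + ⁅ρ w, ρ c'⁆ + ⁅ρ c, ρ (w' + c')⁆ := by
        rw [hWW' w hw w' hw', hxB c' hc', hBx c hc]
    _ = ⁅ρ (w + c), ρ (w' + c')⁆ := by
        rw [map_add ρ w c, add_lie, map_add ρ w' c', lie_add, lie_add]

theorem exists_lieEquiv_of_mapsTo_signSpace [FiniteDimensional ℝ u]
    (hκ : ∀ x : u, x ≠ 0 → killingForm ℝ u x x < 0)
    (hs : Function.Involutive s) (hs' : Function.Involutive s') (hss' : Function.Commute s s')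
    (hfix : ∀ x, s x = x → s' x = x → x = 0) {ρ : Module.End ℝ u}
    (hT : ∀ x ∈ signSpace s s' 1 (-1), ρ x ∈ signSpace s s' (-1) 1)
    (hT' : ∀ x ∈ signSpace s s' (-1) 1, ρ x ∈ signSpace s s' 1 (-1))
    (hB : ∀ c ∈ signSpace s s' (-1) (-1), ρ c = c)
    (had : ∀ c ∈ signSpace s s' (-1) (-1), ∀ x, ρ ⁅c, x⁆ = ⁅c, ρ x⁆)
    (hκρ : ∀ x y, killingForm ℝ u (ρ x) (ρ y) = killingForm ℝ u x y) :
    ∃ e : u ≃ₗ⁅ℝ⁆ u, Function.Semiconj e s s' := by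
  have hinj : Function.Injective ρ := (injective_iff_map_eq_zero ρ).2 fun x hx =>
    eq_zero_of_killingForm_self_eq_zero hκ (by rw [← hκρ, hx, map_zero])
  have hW : ∀ x ∈ signSpace s s' 1 (-1) ⊔ signSpace s s' (-1) 1,
      ρ x ∈ signSpace s s' 1 (-1) ⊔ signSpace s s' (-1) 1 := fun x hx => by
    obtain ⟨a, ha, b, hb, rfl⟩ := Submodule.mem_sup.1 hx
    rw [map_add]
    exact add_mem (Submodule.mem_sup_right (hT a ha)) (Submodule.mem_sup_left (hT' b hb))
  have hlie := map_lie_of_preserves_killingForm hκ (signSpace_sup_eq_top hs hs' hss' hfix)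
    (fun x hx y hy => lie_mem_signSpace_of_mem_sup hfix hx hy) hW hB had hκρ
  refine ⟨LieEquiv.ofBijective ⟨ρ, fun {x y} => hlie x y⟩
    ⟨hinj, LinearMap.injective_iff_surjective.1 hinj⟩,
    semiconj_of_mapsTo_signSpace hs hs' hss' hfix hT hT' ?_⟩
  exact fun c hc => (hB c hc).symm ▸ hc

theorem exists_lieEquiv_semiconj [FiniteDimensional ℝ u]
    (hκ : ∀ x : u, x ≠ 0 → killingForm ℝ u x x < 0)
    (hs : Function.Involutive s) (hs' : Function.Involutive s') (hss' : Function.Commute s s')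
    (hfix : ∀ x, s x = x → s' x = x → x = 0) :
    ∃ e : u ≃ₗ⁅ℝ⁆ u, Function.Semiconj e s s' := by
  obtain ⟨c₀, hc₀, hreg⟩ := exists_regular_mem_signSpace hκ hs hs' hss' hfix
  set T := signSpace s s' 1 (-1)
  set T' := signSpace s s' (-1) 1
  set B := signSpace s s' (-1) (-1)
  set M := LieAlgebra.ad ℝ u c₀
  have hBB : ∀ c ∈ B, ∀ c' ∈ B, ⁅c, c'⁆ = 0 := fun c hc c' hc' =>
    lie_eq_zero_of_mem_signSpace_neg_neg hfix hc hc'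
  have hkerM : LinearMap.ker M ≤ B := fun x hx => by
    obtain ⟨w, hw, c, hc, rfl⟩ := Submodule.mem_sup.1
      ((signSpace_sup_eq_top hs hs' hss' hfix).ge Submodule.mem_top : x ∈ T ⊔ T' ⊔ B)
    rw [LinearMap.mem_ker, map_add, LieAlgebra.ad_apply, LieAlgebra.ad_apply, hBB c₀ hc₀ c hc,
      add_zero] at hx
    rw [hreg w hw hx, zero_add]
    exact hc
  have hMT : ∀ x ∈ T, M x ∈ T' := fun x hx =>
    (by simpa using lie_mem_signSpace hc₀ hx : ⁅c₀, x⁆ ∈ signSpace s s' (-1) 1)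
  have hMT' : ∀ x ∈ T', M x ∈ T := fun x hx =>
    (by simpa using lie_mem_signSpace hc₀ hx : ⁅c₀, x⁆ ∈ signSpace s s' 1 (-1))
  let _ : NormedAddCommGroup u := (killingInnerCore hκ).toNormedAddCommGroup
  let _ : InnerProductSpace ℝ u := InnerProductSpace.ofCore (killingInnerCore hκ).toCore
  obtain ⟨ρ, hiso, hker, hcomm, hswap⟩ := exists_polar_isometry_of_skew (M := M) fun x y => by
    show -killingForm ℝ u ⁅c₀, x⁆ y = -(-killingForm ℝ u x ⁅c₀, y⁆)
    rw [LieModule.traceForm_apply_lie_apply']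
  refine exists_lieEquiv_of_mapsTo_signSpace hκ hs hs' hss' hfix
    (hswap T T' ((disjoint_signSpace (Or.inl (by norm_num))).mono_right hkerM) hMT hMT')
    (hswap T' T ((disjoint_signSpace (Or.inr (by norm_num))).mono_right hkerM) hMT' hMT)
    (fun c hc => hker c (hBB c₀ hc₀ c hc)) (fun c hc x => ?_) fun x y => neg_injective (hiso x y)
  have hMc : Commute M (LieAlgebra.ad ℝ u c) := LinearMap.ext fun y => by
    show ⁅c₀, ⁅c, y⁆⁆ = ⁅c, ⁅c₀, y⁆⁆
    rw [leibniz_lie, hBB c₀ hc₀ c hc, zero_lie, zero_add]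
  exact LinearMap.congr_fun (hcomm _ hMc) x

end Compact

theorem mem_of_mem_of_sup_eq_of_sup_map_mulI_eq {E : Type*} [AddCommGroup E] [Module ℝ E]
    [Module ℂ E] [IsScalarTower ℝ ℂ E] {σ : E →ₗ[ℝ] E}
    (hσanti : ∀ x, σ (Complex.I • x) = -(Complex.I • σ x)) {g t p u : Submodule ℝ E}
    (hgfix : ∀ x, x ∈ g ↔ σ x = x) (hg : t ⊔ p = g) (hu : t ⊔ p.map (mulI E) = u) {x : E}
    (hxg : x ∈ g) (hxu : x ∈ u) : x ∈ t := by
  have hσ : ∀ y ∈ t ⊔ p, σ y = y := fun y hy => (hgfix y).1 (hg ▸ hy)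
  rw [← hu] at hxu
  obtain ⟨a, ha, _, ⟨d, hd, rfl⟩, rfl⟩ := Submodule.mem_sup.1 hxu
  change a + Complex.I • d ∈ t
  have hσx : σ (a + Complex.I • d) = a + Complex.I • d := (hgfix _).1 hxg
  rw [map_add, hσ a (Submodule.mem_sup_left ha), hσanti, hσ d (Submodule.mem_sup_right hd),
    add_right_inj] at hσx
  have h2 : (2 : ℝ) • (Complex.I • d) = 0 := by
    rw [two_smul]
    nth_rewrite 1 [← hσx]
    exact neg_add_cancel _
  rw [(smul_eq_zero.1 h2).resolve_left two_ne_zero, add_zero]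
  exact ha

section RealForm

variable {L : Type*} [LieRing L] [LieAlgebra ℂ L] [LieAlgebra ℝ L] [IsScalarTower ℝ ℂ L]
  (u : LieSubalgebra ℝ L)

def LieSubalgebra.restrictEnd (f : L →ₗ[ℝ] L) (hlie : ∀ x y, f ⁅x, y⁆ = ⁅f x, f y⁆)
    (hf : ∀ x ∈ u, f x ∈ u) : u →ₗ⁅ℝ⁆ u where
  toFun x := ⟨f x, hf x x.2⟩
  map_add' x y := Subtype.ext (map_add f (x : L) y)
  map_smul' r x := Subtype.ext (map_smul f r (x : L))
  map_lie' {x y} := Subtype.ext (hlie x y)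

def realFormSum : u × u →ₗ[ℝ] L := (u.incl : u →ₗ[ℝ] L).coprod (mulI L ∘ₗ u.incl)

variable {u}

theorem realFormSum_apply (a b : u) : realFormSum u (a, b) = a + Complex.I • (b : L) := rfl

theorem lie_realFormSum (a b a' b' : u) :
    ⁅realFormSum u (a, b), realFormSum u (a', b')⁆ =
      realFormSum u (⁅a, a'⁆ - ⁅b, b'⁆, ⁅a, b'⁆ + ⁅b, a'⁆) := by
  simp only [realFormSum_apply, AddMemClass.coe_add, AddSubgroupClass.coe_sub,
    LieSubalgebra.coe_bracket, add_lie, lie_add, lie_smul, smul_lie, smul_smul, Complex.I_mul_I,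
    neg_one_smul, smul_add]
  abel

theorem realFormSum_bijective {τ : L →ₗ[ℝ] L}
    (hτanti : ∀ x, τ (Complex.I • x) = -(Complex.I • τ x)) (hufix : ∀ x ∈ u, τ x = x)
    (hrfu : ∀ x : L, ∃ a ∈ u, ∃ b ∈ u, x = a + Complex.I • b) :
    Function.Bijective (realFormSum u) := by
  refine ⟨(injective_iff_map_eq_zero _).2 fun ⟨a, b⟩ hab => ?_, fun x => ?_⟩
  · rw [realFormSum_apply] at hab
    -- applying `τ` gives `a - i b = 0`
    have hτ : (a : L) - Complex.I • (b : L) = 0 := by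
      rw [sub_eq_add_neg, ← hufix a a.2, ← hufix b b.2, ← hτanti, ← map_add, hab, map_zero]
    have ha : (a : L) = 0 := by
      have h2 : (2 : ℝ) • (a : L) = 0 := by
        rw [two_smul]
        linear_combination (norm := module) hab + hτ
      exact (smul_eq_zero.1 h2).resolve_left two_ne_zero
    have hb : (b : L) = 0 := by
      rw [ha, zero_add] at hab
      simpa using congrArg (Complex.I • ·) hab
    exact Prod.ext (Subtype.ext ha) (Subtype.ext hb)
  · obtain ⟨a, ha, b, hb, rfl⟩ := hrfu x
    exact ⟨(⟨a, ha⟩, ⟨b, hb⟩), rfl⟩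

theorem exists_lieEquiv_realFormSum (hbij : Function.Bijective (realFormSum u)) (ρ : u ≃ₗ⁅ℝ⁆ u) :
    ∃ F : L ≃ₗ⁅ℝ⁆ L, ∀ a b : u, F (realFormSum u (a, b)) = realFormSum u (ρ a, ρ b) := by
  set e := LinearEquiv.ofBijective _ hbij
  set F : L ≃ₗ[ℝ] L := e.symm.trans ((ρ.toLinearEquiv.prodCongr ρ.toLinearEquiv).trans e)
  have hF : ∀ a b : u, F (realFormSum u (a, b)) = realFormSum u (ρ a, ρ b) := fun a b => by
    simp [F, e]
  refine ⟨LieEquiv.ofBijective ⟨F.toLinearMap, fun {x y} => ?_⟩ F.bijective, hF⟩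
  obtain ⟨⟨a, b⟩, rfl⟩ := hbij.2 x
  obtain ⟨⟨a', b'⟩, rfl⟩ := hbij.2 y
  show F ⁅realFormSum u (a, b), realFormSum u (a', b')⁆ =
    ⁅F (realFormSum u (a, b)), F (realFormSum u (a', b'))⁆
  simp only [lie_realFormSum, hF, map_sub, map_add, LieEquiv.map_lie]

theorem apply_realFormSum {σ : L →ₗ[ℝ] L} (hσanti : ∀ x, σ (Complex.I • x) = -(Complex.I • σ x))
    {s : u →ₗ⁅ℝ⁆ u} (hs : ∀ a : u, (s a : L) = σ a) (a b : u) :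
    σ (realFormSum u (a, b)) = realFormSum u (s a, -s b) := by
  rw [realFormSum_apply, realFormSum_apply, map_add, hσanti, hs, NegMemClass.coe_neg, hs, smul_neg]

end RealForm

theorem LieSubalgebra.map_eq_of_semiconj {L : Type*} [LieRing L] [LieAlgebra ℝ L]
    {g g' : LieSubalgebra ℝ L} {σ σ' : L → L} (hg : ∀ x, x ∈ g ↔ σ x = x)
    (hg' : ∀ x, x ∈ g' ↔ σ' x = x) (F : L ≃ₗ⁅ℝ⁆ L) (hF : Function.Semiconj F σ σ') :
    g.map F.toLieHom = g' := by
  ext y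
  rw [LieSubalgebra.mem_map, hg']
  simp only [LieEquiv.coe_toLieHom]
  constructor
  · rintro ⟨x, hx, rfl⟩
    rw [← hF, (hg x).1 hx]
  · intro hy
    refine ⟨F.symm y, (hg _).2 ?_, F.apply_symm_apply y⟩
    rw [← F.symm_apply_apply (σ _), hF, F.apply_symm_apply, hy]

theorem compatibleTriple_compactParts_intersect_general
    {L : Type*} [LieRing L] [LieAlgebra ℂ L] [LieAlgebra ℝ L]
    [IsScalarTower ℝ ℂ L] [FiniteDimensional ℝ L]
    (g g' u : LieSubalgebra ℝ L)
    -- the three conjugation maps: anti-linear involutive Lie algebra automorphisms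
    (σ σ' τ : L →ₗ[ℝ] L)
    (hσinv : ∀ x, σ (σ x) = x) (hσ'inv : ∀ x, σ' (σ' x) = x)
    (hσanti : ∀ x, σ (Complex.I • x) = -(Complex.I • σ x))
    (hσ'anti : ∀ x, σ' (Complex.I • x) = -(Complex.I • σ' x))
    (hτanti : ∀ x, τ (Complex.I • x) = -(Complex.I • τ x))
    (hσlie : ∀ x y, σ ⁅x, y⁆ = ⁅σ x, σ y⁆)
    (hσ'lie : ∀ x y, σ' ⁅x, y⁆ = ⁅σ' x, σ' y⁆)
    -- their fixed point sets are `g`, `g'`, `u`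
    (hgfix : ∀ x, x ∈ g ↔ σ x = x)
    (hg'fix : ∀ x, x ∈ g' ↔ σ' x = x)
    (hufix : ∀ x, x ∈ u ↔ τ x = x)
    -- compatibility: the conjugations pairwise commute
    (hc1 : ∀ x, σ (σ' x) = σ' (σ x))
    (hc2 : ∀ x, σ (τ x) = τ (σ x))
    (hc3 : ∀ x, σ' (τ x) = τ (σ' x))
    -- `g`, `g'`, `u` are real forms: `L = W ⊕ iW` for each of them
    (hrfu : ∀ x : L, ∃ a ∈ u, ∃ b ∈ u, x = a + Complex.I • b)
    -- Cartan decompositions `g = t ⊕ p`, `g' = t' ⊕ p'`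
    (t p t' p' : Submodule ℝ L)
    (hg : t ⊔ p = g.toSubmodule)
    (hg' : t' ⊔ p' = g'.toSubmodule)
    -- alignment with the compact real form: `u = t ⊕ ip = t' ⊕ ip'`
    (hu : t ⊔ p.map (mulI L) = u.toSubmodule)
    (hu' : t' ⊔ p'.map (mulI L) = u.toSubmodule)
    -- `u` is compact: its Killing form is negative definite
    (hcompact : ∀ x : u, x ≠ 0 → killingForm ℝ u x x < 0)
    -- `g` and `g'` are not isomorphic as real Lie algebras
    (hniso : IsEmpty (g ≃ₗ⁅ℝ⁆ g')) :
    t ⊓ t' ≠ ⊥ := by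
  intro h
  have hσu : ∀ x ∈ u, σ x ∈ u := fun x hx => (hufix _).2 (by rw [← hc2, (hufix x).1 hx])
  have hσ'u : ∀ x ∈ u, σ' x ∈ u := fun x hx => (hufix _).2 (by rw [← hc3, (hufix x).1 hx])
  set s := u.restrictEnd σ hσlie hσu
  set s' := u.restrictEnd σ' hσ'lie hσ'u
  -- a common fixed vector of `s` and `s'` lies in `g ∩ g' ∩ u = t ∩ t'`
  have hfix : ∀ x : u, s x = x → s' x = x → x = 0 := fun x h₁ h₂ => by
    have hxt : (x : L) ∈ t := mem_of_mem_of_sup_eq_of_sup_map_mulI_eq hσanti hgfix hg hu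
      ((hgfix _).2 (congrArg Subtype.val h₁)) x.2
    have hxt' : (x : L) ∈ t' := mem_of_mem_of_sup_eq_of_sup_map_mulI_eq hσ'anti hg'fix hg' hu'
      ((hg'fix _).2 (congrArg Subtype.val h₂)) x.2
    exact Subtype.ext (by simpa [h] using Submodule.mem_inf.2 ⟨hxt, hxt'⟩)
  obtain ⟨ρ, hρ⟩ := exists_lieEquiv_semiconj hcompact
    (fun x => Subtype.ext (hσinv x)) (fun x => Subtype.ext (hσ'inv x))
    (fun x => Subtype.ext (hc1 x)) hfix
  have hbij := realFormSum_bijective hτanti (fun x hx => (hufix x).1 hx) hrfu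
  obtain ⟨F, hF⟩ := exists_lieEquiv_realFormSum hbij ρ
  have hFσ : Function.Semiconj F σ σ' := fun x => by
    obtain ⟨⟨a, b⟩, rfl⟩ := hbij.2 x
    rw [apply_realFormSum (s := s) hσanti (fun _ => rfl), hF, hF,
      apply_realFormSum (s := s') hσ'anti (fun _ => rfl),
      map_neg, hρ, hρ]
  exact hniso.false (LieEquiv.ofSubalgebras g g' F
    (LieSubalgebra.map_eq_of_semiconj hgfix hg'fix F hFσ))

/-- Let `g`, `g'` be non-isomorphic real forms of a complex semisimple Lie
algebra `L`, compatible with each other and with a compact real form `u` (pairwise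
commuting anti-linear conjugations), with Cartan decompositions `g = t ⊕ p`,
`g' = t' ⊕ p'` aligned with `u`, i.e. `u = t ⊕ ip = t' ⊕ ip'`.  If neither `g` nor `g'`
is compact then `t ∩ t' ≠ 0`. -/
theorem compatibleTriple_compactParts_intersect
    {L : Type*} [LieRing L] [LieAlgebra ℂ L] [LieAlgebra ℝ L]
    [IsScalarTower ℝ ℂ L] [FiniteDimensional ℂ L] [FiniteDimensional ℝ L]
    [LieAlgebra.IsSemisimple ℂ L]
    (g g' u : LieSubalgebra ℝ L)
    -- the three conjugation maps: anti-linear involutive Lie algebra automorphisms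
    (σ σ' τ : L →ₗ[ℝ] L)
    (hσinv : ∀ x, σ (σ x) = x) (hσ'inv : ∀ x, σ' (σ' x) = x) (hτinv : ∀ x, τ (τ x) = x)
    (hσanti : ∀ x, σ (Complex.I • x) = -(Complex.I • σ x))
    (hσ'anti : ∀ x, σ' (Complex.I • x) = -(Complex.I • σ' x))
    (hτanti : ∀ x, τ (Complex.I • x) = -(Complex.I • τ x))
    (hσlie : ∀ x y, σ ⁅x, y⁆ = ⁅σ x, σ y⁆)
    (hσ'lie : ∀ x y, σ' ⁅x, y⁆ = ⁅σ' x, σ' y⁆)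
    (hτlie : ∀ x y, τ ⁅x, y⁆ = ⁅τ x, τ y⁆)
    -- their fixed point sets are `g`, `g'`, `u`
    (hgfix : ∀ x, x ∈ g ↔ σ x = x)
    (hg'fix : ∀ x, x ∈ g' ↔ σ' x = x)
    (hufix : ∀ x, x ∈ u ↔ τ x = x)
    -- compatibility: the conjugations pairwise commute
    (hc1 : ∀ x, σ (σ' x) = σ' (σ x))
    (hc2 : ∀ x, σ (τ x) = τ (σ x))
    (hc3 : ∀ x, σ' (τ x) = τ (σ' x))
    -- `g`, `g'`, `u` are real forms: `L = W ⊕ iW` for each of them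
    (hrfg : ∀ x : L, ∃ a ∈ g, ∃ b ∈ g, x = a + Complex.I • b)
    (hrfg' : ∀ x : L, ∃ a ∈ g', ∃ b ∈ g', x = a + Complex.I • b)
    (hrfu : ∀ x : L, ∃ a ∈ u, ∃ b ∈ u, x = a + Complex.I • b)
    -- Cartan decompositions `g = t ⊕ p`, `g' = t' ⊕ p'`
    (t p t' p' : Submodule ℝ L)
    (hg : t ⊔ p = g.toSubmodule) (hgd : t ⊓ p = ⊥)
    (hg' : t' ⊔ p' = g'.toSubmodule) (hg'd : t' ⊓ p' = ⊥)
    (htt : ∀ x ∈ t, ∀ y ∈ t, ⁅x, y⁆ ∈ t)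
    (htp : ∀ x ∈ t, ∀ y ∈ p, ⁅x, y⁆ ∈ p)
    (hpp : ∀ x ∈ p, ∀ y ∈ p, ⁅x, y⁆ ∈ t)
    (ht't' : ∀ x ∈ t', ∀ y ∈ t', ⁅x, y⁆ ∈ t')
    (ht'p' : ∀ x ∈ t', ∀ y ∈ p', ⁅x, y⁆ ∈ p')
    (hp'p' : ∀ x ∈ p', ∀ y ∈ p', ⁅x, y⁆ ∈ t')
    -- alignment with the compact real form: `u = t ⊕ ip = t' ⊕ ip'`
    (hu : t ⊔ p.map (mulI L) = u.toSubmodule)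
    (hu' : t' ⊔ p'.map (mulI L) = u.toSubmodule)
    -- `u` is compact: its Killing form is negative definite
    (hcompact : ∀ x : u, x ≠ 0 → killingForm ℝ u x x < 0)
    -- `g` and `g'` are not isomorphic as real Lie algebras
    (hniso : IsEmpty (g ≃ₗ⁅ℝ⁆ g'))
    -- neither `g` nor `g'` is compact
    (hgnc : ¬ ∀ x : g, x ≠ 0 → killingForm ℝ g x x < 0)
    (hg'nc : ¬ ∀ x : g', x ≠ 0 → killingForm ℝ g' x x < 0) :
    t ⊓ t' ≠ ⊥ :=
  compatibleTriple_compactParts_intersect_general g g' u σ σ' τ hσinv hσ'inv hσanti hσ'anti hτanti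
    hσlie hσ'lie hgfix hg'fix hufix hc1 hc2 hc3 hrfu t p t' p' hg hg' hu hu' hcompact hniso
end

section
/- Let g and g̃ be non-isomorphic simple non-compact real forms of a complex semisimple Lie algebra g^ℂ forming a compatible triple with a compact real form u, with Cartan decompositions g = t ⊕ p, g̃ = t̃ ⊕ p̃, u = t ⊕ ip = t̃ ⊕ ip̃. Then p ∩ p̃ ≠ 0. -/
open Complex

section Involutions

variable {R V : Type*} [Ring R] [AddCommGroup V] [Module R V]

theorem mem_right_iff_of_sup_eq [IsAddTorsionFree V] {τ : V →ₗ[R] V} {t p W : Submodule R V}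
    (hW : t ⊔ p = W) (ht : ∀ x ∈ t, τ x = x) (hp : ∀ x ∈ p, τ x = -x) {x : V} :
    x ∈ p ↔ x ∈ W ∧ τ x = -x := by
  refine ⟨fun hx => ⟨hW ▸ Submodule.mem_sup_right hx, hp x hx⟩, fun ⟨hxW, hτx⟩ => ?_⟩
  obtain ⟨a, ha, b, hb, rfl⟩ := Submodule.mem_sup.mp (hW ▸ hxW)
  rw [map_add, ht a ha, hp b hb, neg_add, add_left_inj] at hτx
  rwa [self_eq_neg.mp hτx, zero_add]

theorem mem_left_iff_of_sup_eq [IsAddTorsionFree V] {τ : V →ₗ[R] V} {t p W : Submodule R V}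
    (hW : t ⊔ p = W) (ht : ∀ x ∈ t, τ x = x) (hp : ∀ x ∈ p, τ x = -x) {x : V} :
    x ∈ t ↔ x ∈ W ∧ τ x = x := by
  have := mem_right_iff_of_sup_eq (τ := -τ) (sup_comm t p ▸ hW)
    (fun y hy => by rw [LinearMap.neg_apply, hp y hy, neg_neg])
    (fun y hy => by rw [LinearMap.neg_apply, ht y hy]) (x := x)
  simpa only [LinearMap.neg_apply, neg_inj] using this

theorem map_eq_neg_of_joint_fixed_eq_zero {σ σ' τ : V →ₗ[R] V}
    (hσ'inv : ∀ x, σ' (σ' x) = x) (hσσ' : ∀ x, σ (σ' x) = σ' (σ x))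
    (hσ'τ : ∀ x, σ' (τ x) = τ (σ' x))
    (h0 : ∀ y, σ y = y → σ' y = y → τ y = -y → y = 0)
    {x : V} (hσx : σ x = x) (hτx : τ x = -x) : σ' x = -x := by
  refine eq_neg_of_add_eq_zero_right (h0 (x + σ' x) ?_ ?_ ?_)
  · rw [map_add, hσx, hσσ', hσx]
  · rw [map_add, hσ'inv, add_comm]
  · rw [map_add, hτx, ← hσ'τ, hτx, map_neg, neg_add]

end Involutions

section Antilinear

variable {E : Type*} [AddCommGroup E] [Module ℂ E] {f : E → E}

theorem eq_neg_of_map_I_smul_eq (hf : ∀ x, f (I • x) = -(I • f x)) {x : E}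
    (hx : f (I • x) = I • x) : f x = -x := by
  apply smul_right_injective E I_ne_zero
  simp only [smul_neg, ← neg_eq_iff_eq_neg, ← hf, hx]

theorem map_I_smul_eq_of_map_eq_neg (hf : ∀ x, f (I • x) = -(I • f x)) {x : E}
    (hx : f x = -x) : f (I • x) = I • x := by
  rw [hf, hx, smul_neg, neg_neg]

theorem eq_zero_of_map_eq_of_map_I_smul_eq (hf : ∀ x, f (I • x) = -(I • f x)) {x : E}
    (hx : f x = x) (hIx : f (I • x) = I • x) : x = 0 := by
  have := IsAddTorsionFree.of_isTorsionFree ℂ E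
  exact self_eq_neg.mp (hx.symm.trans (eq_neg_of_map_I_smul_eq hf hIx))

end Antilinear

section CartanDecomposition

variable {E : Type*} [AddCommGroup E] [Module ℂ E] [Module ℝ E] [IsScalarTower ℝ ℂ E]
  {σ τ : E →ₗ[ℝ] E} {g u t p : Submodule ℝ E}

theorem map_eq_neg_of_mem_of_sup_map_mulI_eq (hu : t ⊔ p.map (mulI E) = u)
    (hufix : ∀ x, x ∈ u ↔ τ x = x) (hτanti : ∀ x, τ (I • x) = -(I • τ x))
    {x : E} (hx : x ∈ p) : τ x = -x :=
  eq_neg_of_map_I_smul_eq hτanti <| (hufix _).mp <| hu ▸ Submodule.mem_sup_right ⟨x, hx, rfl⟩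

theorem mem_iff_map_eq_self_and_map_eq_neg (hg : t ⊔ p = g) (hgfix : ∀ x, x ∈ g ↔ σ x = x)
    (hu : t ⊔ p.map (mulI E) = u) (hufix : ∀ x, x ∈ u ↔ τ x = x)
    (hτanti : ∀ x, τ (I • x) = -(I • τ x)) {x : E} :
    x ∈ p ↔ σ x = x ∧ τ x = -x := by
  have := IsAddTorsionFree.of_isTorsionFree ℝ E
  rw [mem_right_iff_of_sup_eq hg (fun y hy => (hufix y).mp (hu ▸ Submodule.mem_sup_left hy))
    (fun y => map_eq_neg_of_mem_of_sup_map_mulI_eq hu hufix hτanti), hgfix]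

theorem mem_iff_map_eq_self_and_map_eq_self (hg : t ⊔ p = g) (hgfix : ∀ x, x ∈ g ↔ σ x = x)
    (hu : t ⊔ p.map (mulI E) = u) (hufix : ∀ x, x ∈ u ↔ τ x = x)
    (hτanti : ∀ x, τ (I • x) = -(I • τ x)) {x : E} :
    x ∈ t ↔ σ x = x ∧ τ x = x := by
  have := IsAddTorsionFree.of_isTorsionFree ℝ E
  rw [mem_left_iff_of_sup_eq hg (fun y hy => (hufix y).mp (hu ▸ Submodule.mem_sup_left hy))
    (fun y => map_eq_neg_of_mem_of_sup_map_mulI_eq hu hufix hτanti), hgfix]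

end CartanDecomposition

theorem LieSubalgebra.toSubmodule_le_of_lie_mem {K L : Type*} [CommRing K] [LieRing L]
    [LieAlgebra K L] {g : LieSubalgebra K L} [LieAlgebra.IsSimple K g] {I : Submodule K L}
    (hI : ∀ a ∈ g, ∀ m ∈ I, ⁅a, m⁆ ∈ I) {x : L} (hxg : x ∈ g) (hxI : x ∈ I) (hx : x ≠ 0) :
    g.toSubmodule ≤ I := by
  let J : LieIdeal K g :=
    { I.comap g.toSubmodule.subtype with lie_mem := fun {a m} hm => hI a a.2 m hm }
  rcases LieAlgebra.IsSimple.eq_bot_or_eq_top J with hJ | hJ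
  · have hxJ : (⟨x, hxg⟩ : g) ∈ J := hxI
    rw [hJ, LieSubmodule.mem_bot] at hxJ
    exact absurd (congrArg Subtype.val hxJ) hx
  · intro y hy
    have hyJ : (⟨y, hy⟩ : g) ∈ J := hJ ▸ LieSubmodule.mem_top _
    exact hyJ

section BracketSpan

variable {K L : Type*} [CommRing K] [LieRing L] [LieAlgebra K L] {t p : Submodule K L}

def bracketSpan (p : Submodule K L) : Submodule K L :=
  Submodule.span K (Set.image2 (⁅·, ·⁆) (p : Set L) p)

theorem lie_mem_bracketSpan {x y : L} (hx : x ∈ p) (hy : y ∈ p) : ⁅x, y⁆ ∈ bracketSpan p :=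
  Submodule.subset_span (Set.mem_image2_of_mem hx hy)

theorem bracketSpan_le (hpp : ∀ x ∈ p, ∀ y ∈ p, ⁅x, y⁆ ∈ t) : bracketSpan p ≤ t :=
  Submodule.span_le.mpr <| by rintro _ ⟨x, hx, y, hy, rfl⟩; exact hpp x hx y hy

theorem lie_mem_bracketSpan_of_mem (htp : ∀ x ∈ t, ∀ y ∈ p, ⁅x, y⁆ ∈ p) {a m : L} (ha : a ∈ t)
    (hm : m ∈ bracketSpan p) : ⁅a, m⁆ ∈ bracketSpan p := by
  induction hm using Submodule.span_induction with
  | mem _ hz =>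
    obtain ⟨x, hx, y, hy, rfl⟩ := hz
    rw [leibniz_lie]
    exact add_mem (lie_mem_bracketSpan (htp a ha x hx) hy)
      (lie_mem_bracketSpan hx (htp a ha y hy))
  | zero => simp
  | add _ _ _ _ hx hy => rw [lie_add]; exact add_mem hx hy
  | smul c _ _ hx => rw [lie_smul]; exact Submodule.smul_mem _ c hx

theorem lie_mem_sup_bracketSpan (htp : ∀ x ∈ t, ∀ y ∈ p, ⁅x, y⁆ ∈ p)
    (hpp : ∀ x ∈ p, ∀ y ∈ p, ⁅x, y⁆ ∈ t) {a m : L} (ha : a ∈ t ⊔ p)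
    (hm : m ∈ p ⊔ bracketSpan p) : ⁅a, m⁆ ∈ p ⊔ bracketSpan p := by
  obtain ⟨a₁, ha₁, a₂, ha₂, rfl⟩ := Submodule.mem_sup.mp ha
  obtain ⟨m₁, hm₁, m₂, hm₂, rfl⟩ := Submodule.mem_sup.mp hm
  have hm₂t : m₂ ∈ t := bracketSpan_le hpp hm₂
  rw [lie_add, add_lie, add_lie]
  refine add_mem (add_mem ?_ ?_) (add_mem ?_ ?_)
  · exact Submodule.mem_sup_left (htp a₁ ha₁ m₁ hm₁)
  · exact Submodule.mem_sup_right (lie_mem_bracketSpan ha₂ hm₁)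
  · exact Submodule.mem_sup_right (lie_mem_bracketSpan_of_mem htp ha₁ hm₂)
  · rw [← lie_skew]
    exact Submodule.mem_sup_left (neg_mem (htp m₂ hm₂t a₂ ha₂))

theorem le_bracketSpan_of_isSimple {g : LieSubalgebra K L} [LieAlgebra.IsSimple K g]
    (hg : t ⊔ p = g.toSubmodule) (hd : t ⊓ p = ⊥)
    (htp : ∀ x ∈ t, ∀ y ∈ p, ⁅x, y⁆ ∈ p) (hpp : ∀ x ∈ p, ∀ y ∈ p, ⁅x, y⁆ ∈ t) (hp : p ≠ ⊥) :
    t ≤ bracketSpan p := by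
  obtain ⟨x, hx, hx0⟩ := Submodule.exists_mem_ne_zero_of_ne_bot hp
  have hgI : g.toSubmodule ≤ p ⊔ bracketSpan p :=
    LieSubalgebra.toSubmodule_le_of_lie_mem
      (fun a ha m hm => lie_mem_sup_bracketSpan htp hpp (hg ▸ ha) hm)
      (hg ▸ Submodule.mem_sup_right hx : x ∈ g.toSubmodule) (Submodule.mem_sup_left hx) hx0
  intro a ha
  obtain ⟨b, hb, c, hc, rfl⟩ := Submodule.mem_sup.mp (hgI (hg ▸ Submodule.mem_sup_left ha))
  have hbt : b ∈ t := by
    simpa using sub_mem ha (bracketSpan_le hpp hc)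
  have hb0 : b ∈ t ⊓ p := ⟨hbt, hb⟩
  rw [hd, Submodule.mem_bot] at hb0
  rwa [hb0, zero_add]

end BracketSpan

theorem I_smul_mem_of_inf_eq_bot {E : Type*} [AddCommGroup E] [Module ℂ E] [Module ℝ E]
    {σ σ' τ : E →ₗ[ℝ] E} {p t' p' : Submodule ℝ E} (hp : ∀ x, x ∈ p ↔ σ x = x ∧ τ x = -x)
    (hp' : ∀ x, x ∈ p' ↔ σ' x = x ∧ τ x = -x) (ht' : ∀ x, x ∈ t' ↔ σ' x = x ∧ τ x = x)
    (hσ'inv : ∀ x, σ' (σ' x) = x) (hσσ' : ∀ x, σ (σ' x) = σ' (σ x))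
    (hσ'τ : ∀ x, σ' (τ x) = τ (σ' x))
    (hσ'anti : ∀ x, σ' (I • x) = -(I • σ' x)) (hτanti : ∀ x, τ (I • x) = -(I • τ x))
    (hpp' : p ⊓ p' = ⊥) {x : E} (hx : x ∈ p) : I • x ∈ t' := by
  have h0 : ∀ y, σ y = y → σ' y = y → τ y = -y → y = 0 := fun y hσy hσ'y hτy => by
    have hy : y ∈ p ⊓ p' := ⟨(hp y).mpr ⟨hσy, hτy⟩, (hp' y).mpr ⟨hσ'y, hτy⟩⟩
    rwa [hpp', Submodule.mem_bot] at hy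
  obtain ⟨hσx, hτx⟩ := (hp x).mp hx
  exact (ht' _).mpr ⟨map_I_smul_eq_of_map_eq_neg hσ'anti
    (map_eq_neg_of_joint_fixed_eq_zero hσ'inv hσσ' hσ'τ h0 hσx hτx),
    map_I_smul_eq_of_map_eq_neg hτanti hτx⟩

theorem lie_mem_of_I_smul_mem {L : Type*} [LieRing L] [LieAlgebra ℂ L] [LieAlgebra ℝ L]
    {t p : Submodule ℝ L} (htt : ∀ x ∈ t, ∀ y ∈ t, ⁅x, y⁆ ∈ t) (hIp : ∀ x ∈ p, I • x ∈ t)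
    {x y : L} (hx : x ∈ p) (hy : y ∈ p) : ⁅x, y⁆ ∈ t := by
  have h := htt _ (hIp x hx) _ (hIp y hy)
  rwa [smul_lie, lie_smul, smul_smul, I_mul_I, neg_one_smul, neg_mem_iff] at h

theorem LieSubalgebra.eq_of_sup_eq_of_sup_map_mulI_eq {L : Type*} [LieRing L] [LieAlgebra ℂ L]
    [LieAlgebra ℝ L] [IsScalarTower ℝ ℂ L] {g u : LieSubalgebra ℝ L} {t p : Submodule ℝ L}
    (hg : t ⊔ p = g.toSubmodule) (hu : t ⊔ p.map (mulI L) = u.toSubmodule) (hp : p = ⊥) :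
    g = u :=
  LieSubalgebra.toSubmodule_injective <| by rw [← hg, ← hu, hp, Submodule.map_bot]

theorem compatibleTriple_noncompactParts_intersect_general
    {L : Type*} [LieRing L] [LieAlgebra ℂ L] [LieAlgebra ℝ L]
    [IsScalarTower ℝ ℂ L]
    (g g' u : LieSubalgebra ℝ L)
    -- the three conjugation maps: anti-linear involutive Lie algebra automorphisms
    (σ σ' τ : L →ₗ[ℝ] L)
    (hσinv : ∀ x, σ (σ x) = x) (hσ'inv : ∀ x, σ' (σ' x) = x)
    (hσanti : ∀ x, σ (Complex.I • x) = -(Complex.I • σ x))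
    (hσ'anti : ∀ x, σ' (Complex.I • x) = -(Complex.I • σ' x))
    (hτanti : ∀ x, τ (Complex.I • x) = -(Complex.I • τ x))
    -- their fixed point sets are `g`, `g'`, `u`
    (hgfix : ∀ x, x ∈ g ↔ σ x = x)
    (hg'fix : ∀ x, x ∈ g' ↔ σ' x = x)
    (hufix : ∀ x, x ∈ u ↔ τ x = x)
    -- compatibility: the conjugations pairwise commute
    (hc1 : ∀ x, σ (σ' x) = σ' (σ x))
    (hc2 : ∀ x, σ (τ x) = τ (σ x))
    (hc3 : ∀ x, σ' (τ x) = τ (σ' x))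
    -- Cartan decompositions `g = t ⊕ p`, `g' = t' ⊕ p'`
    (t p t' p' : Submodule ℝ L)
    (hg : t ⊔ p = g.toSubmodule)
    (hg' : t' ⊔ p' = g'.toSubmodule) (hg'd : t' ⊓ p' = ⊥)
    (htt : ∀ x ∈ t, ∀ y ∈ t, ⁅x, y⁆ ∈ t)
    (ht'p' : ∀ x ∈ t', ∀ y ∈ p', ⁅x, y⁆ ∈ p')
    (hp'p' : ∀ x ∈ p', ∀ y ∈ p', ⁅x, y⁆ ∈ t')
    -- alignment with the compact real form: `u = t ⊕ ip = t' ⊕ ip'`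
    (hu : t ⊔ p.map (mulI L) = u.toSubmodule)
    (hu' : t' ⊔ p'.map (mulI L) = u.toSubmodule)
    -- `u` is compact: its Killing form is negative definite
    (hcompact : ∀ x : u, x ≠ 0 → killingForm ℝ u x x < 0)
    -- neither `g` nor `g'` is compact
    (hgnc : ¬ ∀ x : g, x ≠ 0 → killingForm ℝ g x x < 0)
    (hg'nc : ¬ ∀ x : g', x ≠ 0 → killingForm ℝ g' x x < 0)
    -- both real forms are simple
    (hg'simple : LieAlgebra.IsSimple ℝ g') :
    p ⊓ p' ≠ ⊥ := by
  intro hpp'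
  have hp : ∀ x, x ∈ p ↔ σ x = x ∧ τ x = -x := fun _ =>
    mem_iff_map_eq_self_and_map_eq_neg hg hgfix hu hufix hτanti
  have ht : ∀ x, x ∈ t ↔ σ x = x ∧ τ x = x := fun _ =>
    mem_iff_map_eq_self_and_map_eq_self hg hgfix hu hufix hτanti
  have hp' : ∀ x, x ∈ p' ↔ σ' x = x ∧ τ x = -x := fun _ =>
    mem_iff_map_eq_self_and_map_eq_neg hg' hg'fix hu' hufix hτanti
  have ht' : ∀ x, x ∈ t' ↔ σ' x = x ∧ τ x = x := fun _ =>
    mem_iff_map_eq_self_and_map_eq_self hg' hg'fix hu' hufix hτanti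
  have hIp : ∀ x ∈ p, I • x ∈ t' := fun x =>
    I_smul_mem_of_inf_eq_bot hp hp' ht' hσ'inv hc1 hc3 hσ'anti hτanti hpp'
  have hIp' : ∀ x ∈ p', I • x ∈ t := fun x =>
    I_smul_mem_of_inf_eq_bot hp' hp ht hσinv (fun x => (hc1 x).symm) hc2 hσanti hτanti
      (inf_comm p p' ▸ hpp')
  have hp0 : p ≠ ⊥ := fun h =>
    hgnc (LieSubalgebra.eq_of_sup_eq_of_sup_map_mulI_eq hg hu h ▸ hcompact)
  have hp'0 : p' ≠ ⊥ := fun h =>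
    hg'nc (LieSubalgebra.eq_of_sup_eq_of_sup_map_mulI_eq hg' hu' h ▸ hcompact)
  have ht't : t' ≤ t := (le_bracketSpan_of_isSimple hg' hg'd ht'p' hp'p' hp'0).trans
    (bracketSpan_le fun x hx y hy => lie_mem_of_I_smul_mem htt hIp' hx hy)
  obtain ⟨x, hx, hx0⟩ := Submodule.exists_mem_ne_zero_of_ne_bot hp0
  exact hx0 (eq_zero_of_map_eq_of_map_I_smul_eq hσanti ((hp x).mp hx).1
    ((ht _).mp (ht't (hIp x hx))).1)

/-- Let `g`, `g'` be non-isomorphic *simple*, non-compact real forms of a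
complex semisimple Lie algebra `L`, forming a compatible triple with a compact real
form `u`, with Cartan decompositions `g = t ⊕ p`, `g' = t' ⊕ p'` aligned with `u`,
i.e. `u = t ⊕ ip = t' ⊕ ip'`.  Then `p ∩ p' ≠ 0`. -/
theorem compatibleTriple_noncompactParts_intersect
    {L : Type*} [LieRing L] [LieAlgebra ℂ L] [LieAlgebra ℝ L]
    [IsScalarTower ℝ ℂ L] [FiniteDimensional ℂ L] [FiniteDimensional ℝ L]
    [LieAlgebra.IsSemisimple ℂ L]
    (g g' u : LieSubalgebra ℝ L)
    -- the three conjugation maps: anti-linear involutive Lie algebra automorphisms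
    (σ σ' τ : L →ₗ[ℝ] L)
    (hσinv : ∀ x, σ (σ x) = x) (hσ'inv : ∀ x, σ' (σ' x) = x) (hτinv : ∀ x, τ (τ x) = x)
    (hσanti : ∀ x, σ (Complex.I • x) = -(Complex.I • σ x))
    (hσ'anti : ∀ x, σ' (Complex.I • x) = -(Complex.I • σ' x))
    (hτanti : ∀ x, τ (Complex.I • x) = -(Complex.I • τ x))
    (hσlie : ∀ x y, σ ⁅x, y⁆ = ⁅σ x, σ y⁆)
    (hσ'lie : ∀ x y, σ' ⁅x, y⁆ = ⁅σ' x, σ' y⁆)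
    (hτlie : ∀ x y, τ ⁅x, y⁆ = ⁅τ x, τ y⁆)
    -- their fixed point sets are `g`, `g'`, `u`
    (hgfix : ∀ x, x ∈ g ↔ σ x = x)
    (hg'fix : ∀ x, x ∈ g' ↔ σ' x = x)
    (hufix : ∀ x, x ∈ u ↔ τ x = x)
    -- compatibility: the conjugations pairwise commute
    (hc1 : ∀ x, σ (σ' x) = σ' (σ x))
    (hc2 : ∀ x, σ (τ x) = τ (σ x))
    (hc3 : ∀ x, σ' (τ x) = τ (σ' x))
    -- `g`, `g'`, `u` are real forms: `L = W ⊕ iW` for each of them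
    (hrfg : ∀ x : L, ∃ a ∈ g, ∃ b ∈ g, x = a + Complex.I • b)
    (hrfg' : ∀ x : L, ∃ a ∈ g', ∃ b ∈ g', x = a + Complex.I • b)
    (hrfu : ∀ x : L, ∃ a ∈ u, ∃ b ∈ u, x = a + Complex.I • b)
    -- Cartan decompositions `g = t ⊕ p`, `g' = t' ⊕ p'`
    (t p t' p' : Submodule ℝ L)
    (hg : t ⊔ p = g.toSubmodule) (hgd : t ⊓ p = ⊥)
    (hg' : t' ⊔ p' = g'.toSubmodule) (hg'd : t' ⊓ p' = ⊥)
    (htt : ∀ x ∈ t, ∀ y ∈ t, ⁅x, y⁆ ∈ t)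
    (htp : ∀ x ∈ t, ∀ y ∈ p, ⁅x, y⁆ ∈ p)
    (hpp : ∀ x ∈ p, ∀ y ∈ p, ⁅x, y⁆ ∈ t)
    (ht't' : ∀ x ∈ t', ∀ y ∈ t', ⁅x, y⁆ ∈ t')
    (ht'p' : ∀ x ∈ t', ∀ y ∈ p', ⁅x, y⁆ ∈ p')
    (hp'p' : ∀ x ∈ p', ∀ y ∈ p', ⁅x, y⁆ ∈ t')
    -- alignment with the compact real form: `u = t ⊕ ip = t' ⊕ ip'`
    (hu : t ⊔ p.map (mulI L) = u.toSubmodule)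
    (hu' : t' ⊔ p'.map (mulI L) = u.toSubmodule)
    -- `u` is compact: its Killing form is negative definite
    (hcompact : ∀ x : u, x ≠ 0 → killingForm ℝ u x x < 0)
    -- `g` and `g'` are not isomorphic as real Lie algebras
    (hniso : IsEmpty (g ≃ₗ⁅ℝ⁆ g'))
    -- neither `g` nor `g'` is compact
    (hgnc : ¬ ∀ x : g, x ≠ 0 → killingForm ℝ g x x < 0)
    (hg'nc : ¬ ∀ x : g', x ≠ 0 → killingForm ℝ g' x x < 0)
    -- both real forms are simple
    (hgsimple : LieAlgebra.IsSimple ℝ g)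
    (hg'simple : LieAlgebra.IsSimple ℝ g') :
    p ⊓ p' ≠ ⊥ :=
  compatibleTriple_noncompactParts_intersect_general g g' u σ σ' τ hσinv hσ'inv hσanti hσ'anti
    hτanti hgfix hg'fix hufix hc1 hc2 hc3 t p t' p' hg hg' hg'd htt ht'p' hp'p' hu hu' hcompact hgnc
    hg'nc hg'simple
end

section
/- In the setup of a compatible triple of semisimple Lie algebras (g, g̃, u) with g ≇ g̃ and t ∩ t̃ = 0 (in the notation of aligned Cartan decompositions with u), one has t ⊆ ip̃ and t̃ ⊆ ip, and consequently both t and t̃ are abelian. -/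
theorem map_eq_neg_of_inf_eq_bot {R M : Type*} [Semiring R] [AddCommGroup M] [Module R M]
    {σ σ' τ : M →ₗ[R] M} {A B : Submodule R M} (hAB : A ⊓ B = ⊥)
    (hA : ∀ y, σ y = y → τ y = y → y ∈ A) (hB : ∀ y, σ' y = y → τ y = y → y ∈ B)
    (hσ' : ∀ y, σ' (σ' y) = y) (hσσ' : ∀ y, σ (σ' y) = σ' (σ y))
    (hσ'τ : ∀ y, σ' (τ y) = τ (σ' y)) {x : M} (hσx : σ x = x) (hτx : τ x = x) :
    σ' x = -x := by
  have hτ : τ (x + σ' x) = x + σ' x := by rw [map_add, hτx, ← hσ'τ, hτx]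
  have hy : x + σ' x ∈ A ⊓ B :=
    ⟨hA _ (by rw [map_add, hσx, hσσ', hσx]) hτ, hB _ (by rw [map_add, hσ', add_comm]) hτ⟩
  rw [hAB, Submodule.mem_bot] at hy
  exact eq_neg_of_add_eq_zero_right hy

section Conjugation

variable {L : Type*} [AddCommGroup L] [Module ℝ L] [Module ℂ L] {σ : L →ₗ[ℝ] L}

theorem map_add_I_smul (hσI : ∀ y, σ (Complex.I • y) = -(Complex.I • σ y)) {a d : L}
    (ha : σ a = a) (hd : σ d = d) : σ (a + Complex.I • d) = a - Complex.I • d := by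
  rw [map_add, hσI, ha, hd, sub_eq_add_neg]

variable [IsScalarTower ℝ ℂ L] {t p : Submodule ℝ L} {x : L}

theorem exists_add_I_smul_of_mem_sup_map_mulI (hx : x ∈ t ⊔ p.map (mulI L)) :
    ∃ a ∈ t, ∃ d ∈ p, a + Complex.I • d = x := by
  obtain ⟨a, ha, _, ⟨d, hd, rfl⟩, rfl⟩ := Submodule.mem_sup.mp hx
  exact ⟨a, ha, d, hd, rfl⟩

theorem mem_of_map_eq_self (hσI : ∀ y, σ (Complex.I • y) = -(Complex.I • σ y))
    (hfix : ∀ y ∈ t ⊔ p, σ y = y) (hx : x ∈ t ⊔ p.map (mulI L)) (hσx : σ x = x) : x ∈ t := by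
  obtain ⟨a, ha, d, hd, rfl⟩ := exists_add_I_smul_of_mem_sup_map_mulI hx
  have : IsAddTorsionFree L := .of_isTorsionFree ℝ L
  have hId : Complex.I • d = 0 := by
    rw [map_add_I_smul hσI (hfix a (Submodule.mem_sup_left ha))
      (hfix d (Submodule.mem_sup_right hd)), sub_eq_add_neg] at hσx
    exact neg_eq_self.mp (add_left_cancel hσx)
  rwa [hId, add_zero]

theorem exists_eq_I_smul_of_map_eq_neg (hσI : ∀ y, σ (Complex.I • y) = -(Complex.I • σ y))
    (hfix : ∀ y ∈ t ⊔ p, σ y = y) (hx : x ∈ t ⊔ p.map (mulI L)) (hσx : σ x = -x) :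
    ∃ d ∈ p, x = Complex.I • d := by
  obtain ⟨a, ha, d, hd, rfl⟩ := exists_add_I_smul_of_mem_sup_map_mulI hx
  have : IsAddTorsionFree L := .of_isTorsionFree ℝ L
  have ha0 : a = 0 := by
    rw [map_add_I_smul hσI (hfix a (Submodule.mem_sup_left ha))
      (hfix d (Submodule.mem_sup_right hd)), neg_add, sub_eq_add_neg] at hσx
    exact self_eq_neg.mp (add_right_cancel hσx)
  exact ⟨d, hd, by rw [ha0, zero_add]⟩

end Conjugation

theorem lie_eq_zero_of_forall_eq_I_smul {L : Type*} [LieRing L] [LieAlgebra ℂ L] [Module ℝ L]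
    {t t' p' : Submodule ℝ L} (htt' : t ⊓ t' = ⊥) (htt : ∀ x ∈ t, ∀ y ∈ t, ⁅x, y⁆ ∈ t)
    (hp'p' : ∀ x ∈ p', ∀ y ∈ p', ⁅x, y⁆ ∈ t') (ht : ∀ x ∈ t, ∃ y ∈ p', x = Complex.I • y) :
    ∀ x ∈ t, ∀ y ∈ t, ⁅x, y⁆ = 0 := by
  intro x hx y hy
  have hxy : ⁅x, y⁆ ∈ t ⊓ t' := by
    refine ⟨htt x hx y hy, ?_⟩
    obtain ⟨a, ha, rfl⟩ := ht x hx
    obtain ⟨b, hb, rfl⟩ := ht y hy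
    rw [smul_lie, lie_smul, smul_smul, Complex.I_mul_I, neg_one_smul]
    exact t'.neg_mem (hp'p' a ha b hb)
  rwa [htt', Submodule.mem_bot] at hxy

theorem compatibleTriple_trivial_t_intersection_general
    {L : Type*} [LieRing L] [LieAlgebra ℂ L] [LieAlgebra ℝ L]
    [IsScalarTower ℝ ℂ L]
    (g g' u : LieSubalgebra ℝ L)
    -- the three conjugation maps: anti-linear involutive Lie algebra automorphisms
    (σ σ' τ : L →ₗ[ℝ] L)
    (hσinv : ∀ x, σ (σ x) = x) (hσ'inv : ∀ x, σ' (σ' x) = x)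
    (hσanti : ∀ x, σ (Complex.I • x) = -(Complex.I • σ x))
    (hσ'anti : ∀ x, σ' (Complex.I • x) = -(Complex.I • σ' x))
    -- their fixed point sets are `g`, `g'`, `u`
    (hgfix : ∀ x, x ∈ g ↔ σ x = x)
    (hg'fix : ∀ x, x ∈ g' ↔ σ' x = x)
    (hufix : ∀ x, x ∈ u ↔ τ x = x)
    -- compatibility: the conjugations pairwise commute
    (hc1 : ∀ x, σ (σ' x) = σ' (σ x))
    (hc2 : ∀ x, σ (τ x) = τ (σ x))
    (hc3 : ∀ x, σ' (τ x) = τ (σ' x))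
    -- Cartan decompositions `g = t ⊕ p`, `g' = t' ⊕ p'`
    (t p t' p' : Submodule ℝ L)
    (hg : t ⊔ p = g.toSubmodule)
    (hg' : t' ⊔ p' = g'.toSubmodule)
    (htt : ∀ x ∈ t, ∀ y ∈ t, ⁅x, y⁆ ∈ t)
    (hpp : ∀ x ∈ p, ∀ y ∈ p, ⁅x, y⁆ ∈ t)
    (ht't' : ∀ x ∈ t', ∀ y ∈ t', ⁅x, y⁆ ∈ t')
    (hp'p' : ∀ x ∈ p', ∀ y ∈ p', ⁅x, y⁆ ∈ t')
    -- alignment with the compact real form: `u = t ⊕ ip = t' ⊕ ip'`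
    (hu : t ⊔ p.map (mulI L) = u.toSubmodule)
    (hu' : t' ⊔ p'.map (mulI L) = u.toSubmodule)
    -- the compact parts intersect trivially
    (htt' : t ⊓ t' = ⊥) :
    (∀ x ∈ t, ∃ y ∈ p', x = Complex.I • y) ∧
    (∀ x ∈ t', ∃ y ∈ p, x = Complex.I • y) ∧
    (∀ x ∈ t, ∀ y ∈ t, ⁅x, y⁆ = 0) ∧
    (∀ x ∈ t', ∀ y ∈ t', ⁅x, y⁆ = 0) := by
  have hσfix : ∀ y ∈ t ⊔ p, σ y = y := fun y hy => (hgfix y).1 (hg ▸ hy : y ∈ g.toSubmodule)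
  have hσ'fix : ∀ y ∈ t' ⊔ p', σ' y = y := fun y hy => (hg'fix y).1 (hg' ▸ hy : y ∈ g'.toSubmodule)
  have htu : ∀ x ∈ t, x ∈ u.toSubmodule := fun x hx => hu ▸ Submodule.mem_sup_left hx
  have ht'u : ∀ x ∈ t', x ∈ u.toSubmodule := fun x hx => hu' ▸ Submodule.mem_sup_left hx
  have hut : ∀ y, σ y = y → τ y = y → y ∈ t := fun y hσy hτy =>
    mem_of_map_eq_self hσanti hσfix (hu ▸ (hufix y).2 hτy) hσy
  have hut' : ∀ y, σ' y = y → τ y = y → y ∈ t' := fun y hσ'y hτy =>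
    mem_of_map_eq_self hσ'anti hσ'fix (hu' ▸ (hufix y).2 hτy) hσ'y
  have htI : ∀ x ∈ t, ∃ y ∈ p', x = Complex.I • y := fun x hx =>
    exists_eq_I_smul_of_map_eq_neg hσ'anti hσ'fix (hu' ▸ htu x hx) <|
      map_eq_neg_of_inf_eq_bot htt' hut hut' hσ'inv hc1 hc3
        (hσfix x (Submodule.mem_sup_left hx)) ((hufix x).1 (htu x hx))
  have ht'I : ∀ x ∈ t', ∃ y ∈ p, x = Complex.I • y := fun x hx =>
    exists_eq_I_smul_of_map_eq_neg hσanti hσfix (hu ▸ ht'u x hx) <|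
      map_eq_neg_of_inf_eq_bot (inf_comm t t' ▸ htt') hut' hut hσinv (fun y => (hc1 y).symm) hc2
        (hσ'fix x (Submodule.mem_sup_left hx)) ((hufix x).1 (ht'u x hx))
  exact ⟨htI, ht'I, lie_eq_zero_of_forall_eq_I_smul htt' htt hp'p' htI,
    lie_eq_zero_of_forall_eq_I_smul (inf_comm t t' ▸ htt') ht't' hpp ht'I⟩

/-- In the setup of a compatible triple `(g, g', u)` of real forms of a
complex semisimple Lie algebra with `g` not isomorphic to `g'` and `t ∩ t' = 0`
(in the notation of Cartan decompositions aligned with the compact real form `u`),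
one has `t ⊆ ip'` and `t' ⊆ ip`, and consequently both `t` and `t'` are abelian. -/
theorem compatibleTriple_trivial_t_intersection
    {L : Type*} [LieRing L] [LieAlgebra ℂ L] [LieAlgebra ℝ L]
    [IsScalarTower ℝ ℂ L] [FiniteDimensional ℂ L] [FiniteDimensional ℝ L]
    [LieAlgebra.IsSemisimple ℂ L]
    (g g' u : LieSubalgebra ℝ L)
    -- the three conjugation maps: anti-linear involutive Lie algebra automorphisms
    (σ σ' τ : L →ₗ[ℝ] L)
    (hσinv : ∀ x, σ (σ x) = x) (hσ'inv : ∀ x, σ' (σ' x) = x) (hτinv : ∀ x, τ (τ x) = x)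
    (hσanti : ∀ x, σ (Complex.I • x) = -(Complex.I • σ x))
    (hσ'anti : ∀ x, σ' (Complex.I • x) = -(Complex.I • σ' x))
    (hτanti : ∀ x, τ (Complex.I • x) = -(Complex.I • τ x))
    (hσlie : ∀ x y, σ ⁅x, y⁆ = ⁅σ x, σ y⁆)
    (hσ'lie : ∀ x y, σ' ⁅x, y⁆ = ⁅σ' x, σ' y⁆)
    (hτlie : ∀ x y, τ ⁅x, y⁆ = ⁅τ x, τ y⁆)
    -- their fixed point sets are `g`, `g'`, `u`
    (hgfix : ∀ x, x ∈ g ↔ σ x = x)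
    (hg'fix : ∀ x, x ∈ g' ↔ σ' x = x)
    (hufix : ∀ x, x ∈ u ↔ τ x = x)
    -- compatibility: the conjugations pairwise commute
    (hc1 : ∀ x, σ (σ' x) = σ' (σ x))
    (hc2 : ∀ x, σ (τ x) = τ (σ x))
    (hc3 : ∀ x, σ' (τ x) = τ (σ' x))
    -- `g`, `g'`, `u` are real forms: `L = W ⊕ iW` for each of them
    (hrfg : ∀ x : L, ∃ a ∈ g, ∃ b ∈ g, x = a + Complex.I • b)
    (hrfg' : ∀ x : L, ∃ a ∈ g', ∃ b ∈ g', x = a + Complex.I • b)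
    (hrfu : ∀ x : L, ∃ a ∈ u, ∃ b ∈ u, x = a + Complex.I • b)
    -- Cartan decompositions `g = t ⊕ p`, `g' = t' ⊕ p'`
    (t p t' p' : Submodule ℝ L)
    (hg : t ⊔ p = g.toSubmodule) (hgd : t ⊓ p = ⊥)
    (hg' : t' ⊔ p' = g'.toSubmodule) (hg'd : t' ⊓ p' = ⊥)
    (htt : ∀ x ∈ t, ∀ y ∈ t, ⁅x, y⁆ ∈ t)
    (htp : ∀ x ∈ t, ∀ y ∈ p, ⁅x, y⁆ ∈ p)
    (hpp : ∀ x ∈ p, ∀ y ∈ p, ⁅x, y⁆ ∈ t)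
    (ht't' : ∀ x ∈ t', ∀ y ∈ t', ⁅x, y⁆ ∈ t')
    (ht'p' : ∀ x ∈ t', ∀ y ∈ p', ⁅x, y⁆ ∈ p')
    (hp'p' : ∀ x ∈ p', ∀ y ∈ p', ⁅x, y⁆ ∈ t')
    -- alignment with the compact real form: `u = t ⊕ ip = t' ⊕ ip'`
    (hu : t ⊔ p.map (mulI L) = u.toSubmodule)
    (hu' : t' ⊔ p'.map (mulI L) = u.toSubmodule)
    -- `u` is compact: its Killing form is negative definite
    (hcompact : ∀ x : u, x ≠ 0 → killingForm ℝ u x x < 0)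
    -- `g` and `g'` are not isomorphic as real Lie algebras
    (hniso : IsEmpty (g ≃ₗ⁅ℝ⁆ g'))
    -- the compact parts intersect trivially
    (htt' : t ⊓ t' = ⊥) :
    (∀ x ∈ t, ∃ y ∈ p', x = Complex.I • y) ∧
    (∀ x ∈ t', ∃ y ∈ p, x = Complex.I • y) ∧
    (∀ x ∈ t, ∀ y ∈ t, ⁅x, y⁆ = 0) ∧
    (∀ x ∈ t', ∀ y ∈ t', ⁅x, y⁆ = 0) :=
  compatibleTriple_trivial_t_intersection_general g g' u σ σ' τ hσinv hσ'inv hσanti hσ'anti hgfix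
    hg'fix hufix hc1 hc2 hc3 t p t' p' hg hg' htt hpp ht't' hp'p' hu hu' htt'
end

section
/- Let G = SL(2,ℝ) act on its Lie algebra sl(2,ℝ) by the adjoint action, with Cartan involution θ(x) = −xᵗ, and let G^ℂ = SL(2,ℂ) act on sl(2,ℂ) adjointly. If x ∈ so(2) ⊂ sl(2,ℝ) is nonzero, then the intersection of the complex adjoint orbit with sl(2,ℝ) is the union of exactly two real orbits: (Ad SL(2,ℂ))x ∩ sl(2,ℝ) = (Ad SL(2,ℝ))x ∪ (Ad SL(2,ℝ))(−x). -/
/-!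
Conjugation preserves the determinant, so a traceless real `y = !![p, q; r, -p]` in the complex
orbit of `x = !![0, -a; a, 0]` has `p² + q r = -a² < 0`, hence `r ≠ 0`. An upper triangular element
of `SL(2, ℝ)` conjugates `!![0, -c; c, 0]` to `y` whenever `c r > 0`, which holds for `c = a` or for
`c = -a`. Conversely `diag(i, -i) ∈ SL(2, ℂ)` conjugates `x` to `-x`, so both real orbits lie in the
complex one.
-/

open Matrix

namespace Matrix

def IsSLConj (R : Type*) {n : Type*} [Fintype n] [DecidableEq n] [CommRing R]
    (x y : Matrix n n R) : Prop :=
  ∃ g : SpecialLinearGroup n R,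
    (g : Matrix n n R) * x * ((g⁻¹ : SpecialLinearGroup n R) : Matrix n n R) = y

section IsSLConj

variable {n R : Type*} [Fintype n] [DecidableEq n] [CommRing R] {x y z : Matrix n n R}

lemma IsSLConj.trans (hxy : IsSLConj R x y) (hyz : IsSLConj R y z) : IsSLConj R x z := by
  obtain ⟨g, rfl⟩ := hxy
  obtain ⟨h, rfl⟩ := hyz
  exact ⟨h * g, by simp only [_root_.mul_inv_rev, SpecialLinearGroup.coe_mul, mul_assoc]⟩

lemma IsSLConj.det_eq (h : IsSLConj R x y) : y.det = x.det := by
  obtain ⟨g, rfl⟩ := h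
  rw [det_mul, det_mul, SpecialLinearGroup.det_coe, SpecialLinearGroup.det_coe, one_mul, mul_one]

lemma IsSLConj.map {S : Type*} [CommRing S] (f : R →+* S) (h : IsSLConj R x y) :
    IsSLConj S (x.map f) (y.map f) := by
  obtain ⟨g, rfl⟩ := h
  exact ⟨SpecialLinearGroup.map f g, by simp [← map_inv, Matrix.map_mul]⟩

lemma IsSLConj.det_eq_of_map {S : Type*} [CommRing S] {f : R →+* S} (hf : Function.Injective f)
    (h : IsSLConj S (x.map f) (y.map f)) : y.det = x.det :=
  hf <| by rw [RingHom.map_det, RingHom.map_det]; exact h.det_eq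

lemma isSLConj_of_mul_eq (g : SpecialLinearGroup n R) (h : (g : Matrix n n R) * x = y * g) :
    IsSLConj R x y :=
  ⟨g, by rw [h, mul_assoc, ← SpecialLinearGroup.coe_mul, mul_inv_cancel,
    SpecialLinearGroup.coe_one, mul_one]⟩

end IsSLConj

section FinTwo

variable {R : Type*} [CommRing R]

lemma eta_fin_two_of_transpose_eq_neg [NoZeroDivisors R] [CharZero R]
    {x : Matrix (Fin 2) (Fin 2) R} (h : xᵀ = -x) : x = !![0, -x 1 0; x 1 0, 0] := by
  have hij (i j : Fin 2) : x j i = -x i j := congr_fun (congr_fun h i) j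
  ext i j
  fin_cases i <;> fin_cases j
  · simpa using CharZero.eq_neg_self_iff.mp (hij 0 0)
  · simpa using hij 1 0
  · rfl
  · simpa using CharZero.eq_neg_self_iff.mp (hij 1 1)

lemma eta_fin_two_of_trace_eq_zero {y : Matrix (Fin 2) (Fin 2) R} (h : y.trace = 0) :
    y = !![y 0 0, y 0 1; y 1 0, -y 0 0] := by
  rw [trace_fin_two] at h
  rw [← eq_neg_of_add_eq_zero_right h]
  exact eta_fin_two y

lemma isSLConj_neg_of_diag_eq_zero {i : R} (hi : i ^ 2 = -1) {x : Matrix (Fin 2) (Fin 2) R}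
    (h₀ : x 0 0 = 0) (h₁ : x 1 1 = 0) : IsSLConj R x (-x) := by
  have hdet : (!![i, 0; 0, -i] : Matrix (Fin 2) (Fin 2) R).det = 1 := by
    rw [det_fin_two_of]
    linear_combination -hi
  refine isSLConj_of_mul_eq ⟨_, hdet⟩ ?_
  rw [SpecialLinearGroup.coe_mk]
  ext i j
  fin_cases i <;> fin_cases j <;> simp [mul_apply, Fin.sum_univ_two, h₀, h₁, mul_comm]

-- Mirroring `x e₁ = c e₂`, the witness sends `e₁ ↦ t e₁` and `e₂ ↦ y (t e₁) / c`; its determinant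
-- is `t² r / c`.
lemma isSLConj_rotation_of_sq_mul_eq {K : Type*} [Field K] {c t p q r : K} (hc : c ≠ 0)
    (ht : t ^ 2 * r = c) (hdet : p ^ 2 + q * r + c ^ 2 = 0) :
    IsSLConj K !![0, -c; c, 0] !![p, q; r, -p] := by
  have hg : (!![t, t * p / c; 0, t * r / c] : Matrix (Fin 2) (Fin 2) K).det = 1 := by
    rw [det_fin_two_of]
    field_simp
    linear_combination ht
  refine isSLConj_of_mul_eq ⟨_, hg⟩ ?_
  rw [SpecialLinearGroup.coe_mk]
  simp only [mul_fin_two, EmbeddingLike.apply_eq_iff_eq, vecCons_inj, and_true]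
  refine ⟨⟨?_, ?_⟩, ?_, ?_⟩ <;> field_simp <;> first | ring1 | linear_combination (-t) * hdet

end FinTwo

lemma isSLConj_rotation_of_mul_pos {c p q r : ℝ} (hcr : 0 < c * r)
    (hdet : p ^ 2 + q * r + c ^ 2 = 0) : IsSLConj ℝ !![0, -c; c, 0] !![p, q; r, -p] := by
  have hr : r ≠ 0 := by rintro rfl; simp at hcr
  have hc : c ≠ 0 := by rintro rfl; simp at hcr
  refine isSLConj_rotation_of_sq_mul_eq hc (t := √(c * r) / r) ?_ hdet
  rw [div_pow, Real.sq_sqrt hcr.le]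
  field_simp

lemma isSLConj_rotation_or_neg {a p q r : ℝ} (ha : a ≠ 0) (hdet : p ^ 2 + q * r + a ^ 2 = 0) :
    IsSLConj ℝ !![0, -a; a, 0] !![p, q; r, -p] ∨
      IsSLConj ℝ (-!![0, -a; a, 0]) !![p, q; r, -p] := by
  have hr : r ≠ 0 := by
    rintro rfl
    nlinarith [sq_nonneg p, sq_pos_of_ne_zero ha]
  rcases (mul_ne_zero ha hr).lt_or_gt with har | har
  · right
    have h := isSLConj_rotation_of_mul_pos (c := -a) (p := p) (q := q) (r := r) (by linarith)
      (by linear_combination hdet)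
    simpa using h
  · exact .inl (isSLConj_rotation_of_mul_pos har hdet)

end Matrix

theorem sl2_so2_orbit_intersection_general
    (x : Matrix (Fin 2) (Fin 2) ℝ) (hskew : xᵀ = -x) (hx : x ≠ 0) :
    ∀ y : Matrix (Fin 2) (Fin 2) ℝ, y.trace = 0 →
      ((∃ g : Matrix.SpecialLinearGroup (Fin 2) ℂ,
          (g : Matrix (Fin 2) (Fin 2) ℂ) * x.map Complex.ofReal *
            ((g⁻¹ : Matrix.SpecialLinearGroup (Fin 2) ℂ) : Matrix (Fin 2) (Fin 2) ℂ) =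
            y.map Complex.ofReal) ↔
        ((∃ g : Matrix.SpecialLinearGroup (Fin 2) ℝ,
            (g : Matrix (Fin 2) (Fin 2) ℝ) * x *
              ((g⁻¹ : Matrix.SpecialLinearGroup (Fin 2) ℝ) : Matrix (Fin 2) (Fin 2) ℝ) = y) ∨
         (∃ g : Matrix.SpecialLinearGroup (Fin 2) ℝ,
            (g : Matrix (Fin 2) (Fin 2) ℝ) * (-x) *
              ((g⁻¹ : Matrix.SpecialLinearGroup (Fin 2) ℝ) : Matrix (Fin 2) (Fin 2) ℝ) = y))) := by
  intro y hy
  change IsSLConj ℂ _ _ ↔ IsSLConj ℝ x y ∨ IsSLConj ℝ (-x) y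
  obtain ⟨a, rfl⟩ : ∃ a, x = !![0, -a; a, 0] := ⟨_, eta_fin_two_of_transpose_eq_neg hskew⟩
  obtain ⟨p, q, r, rfl⟩ : ∃ p q r, y = !![p, q; r, -p] :=
    ⟨_, _, _, eta_fin_two_of_trace_eq_zero hy⟩
  have ha : a ≠ 0 := by
    rintro rfl
    exact hx (by ext i j; fin_cases i <;> fin_cases j <;> simp)
  constructor
  · intro h
    refine isSLConj_rotation_or_neg ha ?_
    have hdet := h.det_eq_of_map Complex.ofRealHom.injective
    simp only [det_fin_two_of] at hdet
    linear_combination -hdet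
  · rintro (h | h)
    · exact h.map Complex.ofRealHom
    · refine (isSLConj_neg_of_diag_eq_zero Complex.I_sq (by simp) (by simp)).trans ?_
      rw [← Matrix.map_neg _ Complex.ofReal_neg]
      exact h.map Complex.ofRealHom

/-- for `0 ≠ x ∈ so(2) ⊂ sl(2,ℝ)`, the intersection of the complex
adjoint orbit `(Ad SL(2,ℂ))x` with `sl(2,ℝ)` is the union of exactly the two real
adjoint orbits of `x` and `-x` under `SL(2,ℝ)`. -/
theorem sl2_so2_orbit_intersection
    (x : Matrix (Fin 2) (Fin 2) ℝ) (htr : x.trace = 0) (hskew : xᵀ = -x) (hx : x ≠ 0) :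
    ∀ y : Matrix (Fin 2) (Fin 2) ℝ, y.trace = 0 →
      ((∃ g : Matrix.SpecialLinearGroup (Fin 2) ℂ,
          (g : Matrix (Fin 2) (Fin 2) ℂ) * x.map Complex.ofReal *
            ((g⁻¹ : Matrix.SpecialLinearGroup (Fin 2) ℂ) : Matrix (Fin 2) (Fin 2) ℂ) =
            y.map Complex.ofReal) ↔
        ((∃ g : Matrix.SpecialLinearGroup (Fin 2) ℝ,
            (g : Matrix (Fin 2) (Fin 2) ℝ) * x *
              ((g⁻¹ : Matrix.SpecialLinearGroup (Fin 2) ℝ) : Matrix (Fin 2) (Fin 2) ℝ) = y) ∨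
         (∃ g : Matrix.SpecialLinearGroup (Fin 2) ℝ,
            (g : Matrix (Fin 2) (Fin 2) ℝ) * (-x) *
              ((g⁻¹ : Matrix.SpecialLinearGroup (Fin 2) ℝ) : Matrix (Fin 2) (Fin 2) ℝ) = y))) :=
  sl2_so2_orbit_intersection_general x hskew hx
end

section
/- Let x ∈ p, where sl(2,ℝ) = so(2) ⊕ p is the Cartan decomposition with θ(x) = −xᵗ (so p consists of symmetric traceless real 2×2 matrices). Then the complex adjoint orbit of x meets sl(2,ℝ) in a single real orbit: (Ad SL(2,ℂ))x ∩ sl(2,ℝ) = (Ad SL(2,ℝ))x. -/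
/-!
If `g ∈ SL(2,ℂ)` conjugates `x` to `y`, then so do its real and imaginary parts `A` and `B`
(as intertwiners `A x = y A`), and hence every `A + t B`. Since `det (A + X B)` is a real
polynomial which does not vanish at `X = i`, some real `A + t B` is invertible. If its
determinant is negative, multiply it on the right by an element of the centralizer of `x` of
negative determinant: `x` itself, as `det x = -(a² + b²)` for `x = !![a, b; b, -a] ≠ 0`. Rescaling
by `det^(-1/2)` then gives an element of `SL(2,ℝ)`.
-/

open Matrix

namespace Matrix

variable {n : Type*} [Fintype n]

theorem map_re_mul_eq_and_map_im_mul_eq {g : Matrix n n ℂ} {x y : Matrix n n ℝ}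
    (h : g * x.map Complex.ofReal = y.map Complex.ofReal * g) :
    g.map Complex.re * x = y * g.map Complex.re ∧ g.map Complex.im * x = y * g.map Complex.im := by
  constructor <;> ext i j
  · simpa [mul_apply, Complex.re_sum] using congr(($h i j).re)
  · simpa [mul_apply, Complex.im_sum] using congr(($h i j).im)

variable [DecidableEq n]

theorem exists_det_add_smul_ne_zero {K L : Type*} [CommRing K] [IsDomain K] [Infinite K]
    [CommRing L] [Algebra K L] (A B : Matrix n n K) (z : L)
    (h : (A.map (algebraMap K L) + z • B.map (algebraMap K L)).det ≠ 0) :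
    ∃ t : K, (A + t • B).det ≠ 0 := by
  open Polynomial in
  set P : K[X] := (A.map C + (X : K[X]) • B.map C).det
  have hP : P ≠ 0 := by
    rintro hP
    refine h (Eq.trans ?_ (congrArg (aeval z) hP |>.trans (map_zero _)))
    rw [AlgHom.map_det]
    congr 1
    ext i j
    simp [mul_comm z]
  by_contra! hzero
  refine hP (Polynomial.funext fun t => ?_)
  rw [eval_zero, ← coe_evalRingHom, RingHom.map_det, ← hzero t]
  congr 1
  ext i j
  simp [RingHom.mapMatrix_apply, mul_comm t]

theorem exists_intertwiner_det_ne_zero_of_complex {x y : Matrix n n ℝ} {g : Matrix n n ℂ}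
    (hg : g.det ≠ 0) (h : g * x.map Complex.ofReal = y.map Complex.ofReal * g) :
    ∃ k : Matrix n n ℝ, k.det ≠ 0 ∧ k * x = y * k := by
  obtain ⟨hre, him⟩ := map_re_mul_eq_and_map_im_mul_eq h
  have hg_re_im : g = (g.map Complex.re).map (algebraMap ℝ ℂ) +
      Complex.I • (g.map Complex.im).map (algebraMap ℝ ℂ) := by
    ext i j
    simp [mul_comm Complex.I, Complex.re_add_im]
  obtain ⟨t, ht⟩ := exists_det_add_smul_ne_zero _ _ Complex.I (hg_re_im ▸ hg)
  refine ⟨_, ht, ?_⟩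
  rw [add_mul, mul_add, hre, Matrix.smul_mul, Matrix.mul_smul, him]

theorem exists_intertwiner_det_pos {R : Type*} [CommRing R] [LinearOrder R]
    [IsStrictOrderedRing R] {x y k c : Matrix n n R} (hk : k.det ≠ 0) (hkx : k * x = y * k)
    (hc : Commute c x) (hcdet : c.det < 0) :
    ∃ k' : Matrix n n R, 0 < k'.det ∧ k' * x = y * k' := by
  rcases hk.lt_or_gt with hneg | hpos
  · refine ⟨k * c, by rw [det_mul]; exact mul_pos_of_neg_of_neg hneg hcdet, ?_⟩
    rw [Matrix.mul_assoc, hc.eq, ← Matrix.mul_assoc, hkx, Matrix.mul_assoc]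
  · exact ⟨k, hpos, hkx⟩

theorem SpecialLinearGroup.conj_eq_iff {R : Type*} [CommRing R] (g : SpecialLinearGroup n R)
    (x y : Matrix n n R) :
    (g : Matrix n n R) * x * ((g⁻¹ : SpecialLinearGroup n R) : Matrix n n R) = y ↔
      (g : Matrix n n R) * x = y * g := by
  have hinv : ((g⁻¹ : SpecialLinearGroup n R) : Matrix n n R) * g = 1 := by
    rw [← SpecialLinearGroup.coe_mul, inv_mul_cancel, SpecialLinearGroup.coe_one]
  constructor
  · rintro rfl
    rw [Matrix.mul_assoc _ _ (g : Matrix n n R), hinv, Matrix.mul_one]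
  · intro h
    rw [h, Matrix.mul_assoc, ← SpecialLinearGroup.coe_mul, mul_inv_cancel,
      SpecialLinearGroup.coe_one, Matrix.mul_one]

theorem exists_specialLinearGroup_intertwiner_of_det_pos [Nonempty n] {x y k : Matrix n n ℝ}
    (hk : 0 < k.det) (hkx : k * x = y * k) :
    ∃ g : SpecialLinearGroup n ℝ, (g : Matrix n n ℝ) * x = y * g := by
  set s : ℝ := (k.det ^ ((Fintype.card n : ℝ)⁻¹))⁻¹
  have hs : (s • k).det = 1 := by
    rw [det_smul, inv_pow, Real.rpow_inv_natCast_pow hk.le Fintype.card_ne_zero,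
      inv_mul_cancel₀ hk.ne']
  refine ⟨⟨s • k, hs⟩, ?_⟩
  simp only [Matrix.smul_mul, Matrix.mul_smul, hkx]

end Matrix

section FinTwo

variable {R : Type*} [CommRing R] {x : Matrix (Fin 2) (Fin 2) R}

theorem Matrix.eq_of_trace_eq_zero_of_transpose_eq (htr : x.trace = 0) (hsym : xᵀ = x) :
    x = !![x 0 0, x 0 1; x 0 1, -x 0 0] := by
  have h10 : x 1 0 = x 0 1 := congrFun (congrFun hsym 0) 1
  have h11 : x 1 1 = -x 0 0 := by rw [trace_fin_two] at htr; linear_combination htr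
  ext i j
  fin_cases i <;> fin_cases j <;> simp [h10, h11]

theorem Matrix.det_eq_neg_sq_add_sq_of_trace_eq_zero (htr : x.trace = 0) (hsym : xᵀ = x) :
    x.det = -(x 0 0 ^ 2 + x 0 1 ^ 2) := by
  rw [eq_of_trace_eq_zero_of_transpose_eq htr hsym, det_fin_two_of]
  simp only [of_apply, cons_val', cons_val_zero, cons_val_one, empty_val', cons_val_fin_one]
  ring

theorem Matrix.exists_commute_det_neg [LinearOrder R] [IsStrictOrderedRing R] (htr : x.trace = 0)
    (hsym : xᵀ = x) : ∃ c : Matrix (Fin 2) (Fin 2) R, Commute c x ∧ c.det < 0 := by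
  by_cases hx : x = 0
  · exact ⟨diagonal ![1, -1], hx ▸ Commute.zero_right _, by simp⟩
  refine ⟨x, Commute.refl x, ?_⟩
  rw [det_eq_neg_sq_add_sq_of_trace_eq_zero htr hsym, neg_lt_zero]
  by_contra! hle
  have h00 : x 0 0 = 0 := by nlinarith [sq_nonneg (x 0 0), sq_nonneg (x 0 1)]
  have h01 : x 0 1 = 0 := by nlinarith [sq_nonneg (x 0 0), sq_nonneg (x 0 1)]
  refine hx ?_
  rw [eq_of_trace_eq_zero_of_transpose_eq htr hsym, h00, h01, neg_zero]
  exact (etaExpand_eq (0 : Matrix (Fin 2) (Fin 2) R))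

end FinTwo

/-- for `x ∈ p` (the space of symmetric traceless real `2×2` matrices, the
noncompact part of the Cartan decomposition `sl(2,ℝ) = so(2) ⊕ p` for `θ(x) = -xᵗ`),
the complex adjoint orbit `(Ad SL(2,ℂ))x` meets `sl(2,ℝ)` in the single real orbit
`(Ad SL(2,ℝ))x`. -/
theorem sl2_p_orbit_intersection
    (x : Matrix (Fin 2) (Fin 2) ℝ) (htr : x.trace = 0) (hsym : xᵀ = x) :
    ∀ y : Matrix (Fin 2) (Fin 2) ℝ, y.trace = 0 →
      ((∃ g : Matrix.SpecialLinearGroup (Fin 2) ℂ,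
          (g : Matrix (Fin 2) (Fin 2) ℂ) * x.map Complex.ofReal *
            ((g⁻¹ : Matrix.SpecialLinearGroup (Fin 2) ℂ) : Matrix (Fin 2) (Fin 2) ℂ) =
            y.map Complex.ofReal) ↔
        (∃ g : Matrix.SpecialLinearGroup (Fin 2) ℝ,
            (g : Matrix (Fin 2) (Fin 2) ℝ) * x *
              ((g⁻¹ : Matrix.SpecialLinearGroup (Fin 2) ℝ) : Matrix (Fin 2) (Fin 2) ℝ) = y)) := by
  intro y _
  simp only [SpecialLinearGroup.conj_eq_iff]
  constructor
  · rintro ⟨g, hg⟩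
    obtain ⟨k, hk, hkx⟩ := exists_intertwiner_det_ne_zero_of_complex (by simp) hg
    obtain ⟨c, hc, hcdet⟩ := exists_commute_det_neg htr hsym
    obtain ⟨k', hk', hk'x⟩ := exists_intertwiner_det_pos hk hkx hc hcdet
    exact exists_specialLinearGroup_intertwiner_of_det_pos hk' hk'x
  · rintro ⟨g, hg⟩
    refine ⟨SpecialLinearGroup.map Complex.ofRealHom g, ?_⟩
    have := congrArg (Matrix.map · Complex.ofRealHom) hg
    rwa [Matrix.map_mul, Matrix.map_mul] at this
end

section
/- For the adjoint action of the Lorentz group: let x, x̃ ∈ t = so(n−1) ⊕ so(1) ⊂ o(n−1,1) lie in the compact part of the Cartan decomposition. If x and x̃ lie in the same O(n,ℂ)-adjoint orbit (equivalently have the same characteristic polynomial as complex matrices), then they lie in the same O(n−1,1)-adjoint orbit. -/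
/-!
If `g x g⁻¹ = x'` over `ℂ`, the real and imaginary parts of `g` both intertwine `x` and `x'`, and
`det (Re g + t • Im g)` is a real polynomial in `t` which does not vanish at `t = i`, hence at some
real `t`: so `x` and `x'` are conjugate over `ℝ`. For skew-symmetric `x`, `x'`, a real conjugator
`S` may be replaced by the orthogonal factor `S (SᵀS)^{-1/2}` of its polar decomposition, because
`SᵀS` commutes with `x`. Finally both matrices kill `e = e_{n+1}`; composing an orthogonal
conjugator `Q` with the reflection exchanging `Qᵀe` and `e` yields an orthogonal conjugator fixing
`e`, which then preserves `I_{n,1} = 1 - 2 e eᵀ`.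
-/

open Matrix

/-- The Lorentz metric matrix `I_{n,1} = diag(1,…,1,-1)` on `ℝ^{n+1}`. -/
noncomputable def lorentzEta (n : ℕ) : Matrix (Fin (n + 1)) (Fin (n + 1)) ℝ :=
  Matrix.diagonal fun i => if i = Fin.last n then -1 else 1

namespace Matrix

variable {m : Type*} [Fintype m] [DecidableEq m]

open Polynomial in
theorem exists_isUnit_det_add_smul (A B : Matrix m m ℝ)
    (h : IsUnit (A.map Complex.ofReal + Complex.I • B.map Complex.ofReal).det) :
    ∃ t : ℝ, IsUnit (A + t • B).det := by
  set p : ℝ[X] := (A.map C + (X : ℝ[X]) • B.map C).det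
  have eval_p (t : ℝ) : p.eval t = (A + t • B).det := by
    rw [← coe_evalRingHom, RingHom.map_det]
    congr 1
    ext i j
    simp only [RingHom.mapMatrix_apply, map_apply, add_apply, smul_apply, smul_eq_mul,
      coe_evalRingHom, eval_add, eval_mul, eval_C, eval_X]
  have aeval_p :
      aeval Complex.I p = (A.map Complex.ofReal + Complex.I • B.map Complex.ofReal).det := by
    rw [← AlgHom.coe_toRingHom, RingHom.map_det]
    congr 1
    ext i j
    simp [mul_comm _ Complex.I]
  have hp : p ≠ 0 := fun hp => h.ne_zero (by rw [← aeval_p, hp, map_zero])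
  obtain ⟨t, ht⟩ : ∃ t, p.eval t ≠ 0 := by
    by_contra! H
    exact hp (zero_of_eval_zero p H)
  exact ⟨t, (eval_p t ▸ ht).isUnit⟩

theorem exists_real_conj_of_complex_conj {x x' : Matrix m m ℝ} {g : Matrix m m ℂ}
    (hg : IsUnit g.det) (hgx : g * x.map Complex.ofReal = x'.map Complex.ofReal * g) :
    ∃ S : Matrix m m ℝ, IsUnit S.det ∧ S * x = x' * S := by
  set A := g.map Complex.re
  set B := g.map Complex.im
  have hAB : g = A.map Complex.ofReal + Complex.I • B.map Complex.ofReal := by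
    ext i j
    simp [A, B, mul_comm Complex.I]
  have hA : A * x = x' * A := by
    ext i j
    simpa [A, Matrix.mul_apply, Complex.re_sum] using congr_arg Complex.re (congr_fun₂ hgx i j)
  have hB : B * x = x' * B := by
    ext i j
    simpa [B, Matrix.mul_apply, Complex.im_sum] using congr_arg Complex.im (congr_fun₂ hgx i j)
  obtain ⟨t, ht⟩ := exists_isUnit_det_add_smul A B (hAB ▸ hg)
  refine ⟨A + t • B, ht, ?_⟩
  rw [add_mul, mul_add, smul_mul_assoc, mul_smul_comm, hA, hB]

open scoped ComplexOrder in
theorem PosDef.cfc_inv_sqrt_mul_self_mul_cfc_inv_sqrt {𝕜 : Type*} [RCLike 𝕜]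
    {M : Matrix m m 𝕜} (hM : M.PosDef) :
    cfc (fun t : ℝ => (√t)⁻¹) M * M * cfc (fun t : ℝ => (√t)⁻¹) M = 1 := by
  have hpos : ∀ t ∈ spectrum ℝ M, 0 < t := by
    rw [hM.isHermitian.spectrum_real_eq_range_eigenvalues]
    rintro - ⟨i, rfl⟩
    exact hM.eigenvalues_pos i
  have hfin := M.finite_real_spectrum
  have hsa : IsSelfAdjoint M := hM.isHermitian.isSelfAdjoint
  calc _ = cfc (fun t : ℝ => (√t)⁻¹ * t * (√t)⁻¹) M := by
        rw [cfc_mul (fun t : ℝ => (√t)⁻¹ * t) _ M (hfin.continuousOn _) (hfin.continuousOn _),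
          cfc_mul _ _ M (hfin.continuousOn _) (hfin.continuousOn _), cfc_id' ℝ M hsa]
  _ = cfc (fun _ : ℝ => (1 : ℝ)) M := cfc_congr fun t ht => by
        have := hpos t ht
        field_simp
        rw [Real.sq_sqrt this.le]
  _ = 1 := cfc_const_one ℝ M (ha := hsa)

theorem exists_orthogonal_conj_of_conj {x x' S : Matrix m m ℝ} (hx : xᵀ = -x)
    (hx' : x'ᵀ = -x') (hS : IsUnit S.det) (hSx : S * x = x' * S) :
    ∃ Q : Matrix m m ℝ, Qᵀ * Q = 1 ∧ Q * x = x' * Q := by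
  set M := Sᵀ * S
  have hM : M.PosDef := by
    simpa using PosDef.conjTranspose_mul_self S
      (mulVec_injective_iff_isUnit.mpr ((isUnit_iff_isUnit_det S).mpr hS))
  have hxS : x * Sᵀ = Sᵀ * x' := by
    simpa [hx, hx'] using congr_arg transpose hSx
  have hMx : Commute M x := by
    rw [commute_iff_eq]
    simp only [M, Matrix.mul_assoc, hSx]
    simp only [← Matrix.mul_assoc, hxS]
  set N := cfc (fun t : ℝ => (√t)⁻¹) M
  have hN : Nᵀ = N := by
    simpa [star_eq_conjTranspose] using (cfc_predicate _ M : IsSelfAdjoint N).star_eq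
  have hNMN : N * M * N = 1 := hM.cfc_inv_sqrt_mul_self_mul_cfc_inv_sqrt
  refine ⟨S * N, ?_, ?_⟩
  · rw [transpose_mul, hN, ← hNMN]
    simp only [M, Matrix.mul_assoc]
  · rw [Matrix.mul_assoc, (hMx.cfc_real _).eq, ← Matrix.mul_assoc, hSx, Matrix.mul_assoc]

/-- The reflection in the hyperplane `w⊥`; for `w = 0` the junk value `2 / 0 = 0` makes it `1`. -/
noncomputable def householder (w : m → ℝ) : Matrix m m ℝ :=
  1 - (2 / (w ⬝ᵥ w)) • vecMulVec w w

theorem transpose_householder (w : m → ℝ) : (householder w)ᵀ = householder w := by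
  simp [householder, transpose_vecMulVec]

theorem householder_mul_self (w : m → ℝ) : householder w * householder w = 1 := by
  by_cases hw : w ⬝ᵥ w = 0
  · simp [householder, hw]
  · simp only [householder, sub_mul, mul_sub, one_mul, mul_one, smul_mul_smul_comm,
      vecMulVec_mul_vecMulVec, vecMulVec_smul, smul_smul]
    match_scalars <;> field_simp; ring

theorem householder_sub_mulVec {u v : m → ℝ} (h : u ⬝ᵥ u = v ⬝ᵥ v) :
    householder (u - v) *ᵥ u = v := by
  have hww : (u - v) ⬝ᵥ (u - v) = 2 * ((u - v) ⬝ᵥ u) := by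
    simp only [sub_dotProduct, dotProduct_sub, dotProduct_comm v u, h]
    ring
  by_cases hw : (u - v) ⬝ᵥ u = 0
  · rw [hw, mul_zero, dotProduct_self_eq_zero, sub_eq_zero] at hww
    simp [householder, hww]
  · have hc : 2 / (2 * ((u - v) ⬝ᵥ u)) * ((u - v) ⬝ᵥ u) = 1 := by field_simp
    rw [householder, sub_mulVec, one_mulVec, smul_mulVec, vecMulVec_mulVec, op_smul_eq_smul,
      smul_smul, hww, hc, one_smul, sub_sub_cancel]

theorem householder_mul_comm {x : Matrix m m ℝ} {w : m → ℝ} (hxw : x *ᵥ w = 0)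
    (hwx : w ᵥ* x = 0) : householder w * x = x * householder w := by
  simp [householder, sub_mul, mul_sub, vecMulVec_mul, mul_vecMulVec, hxw, hwx]

theorem transpose_mul_householder_mul {h : Matrix m m ℝ} {e : m → ℝ} (hh : hᵀ * h = 1)
    (he : hᵀ *ᵥ e = e) : hᵀ * householder e * h = householder e := by
  rw [householder, mul_sub, sub_mul, Matrix.mul_one, hh, mul_smul_comm, smul_mul_assoc,
    mul_vecMulVec, vecMulVec_mul, ← mulVec_transpose, he]

theorem exists_orthogonal_conj_fixing {x x' Q : Matrix m m ℝ} {e : m → ℝ} (hx : xᵀ = -x)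
    (hxe : x *ᵥ e = 0) (hx'e : x' *ᵥ e = 0) (hQ : Qᵀ * Q = 1) (hQx : Q * x = x' * Q) :
    ∃ h : Matrix m m ℝ, hᵀ * h = 1 ∧ h * x = x' * h ∧ hᵀ *ᵥ e = e := by
  have hQ' : Q * Qᵀ = 1 := mul_eq_one_comm.mp hQ
  have hxQ : x * Qᵀ = Qᵀ * x' := by
    calc x * Qᵀ = Qᵀ * (Q * x) * Qᵀ := by rw [← Matrix.mul_assoc, hQ, Matrix.one_mul]
    _ = Qᵀ * x' := by rw [hQx, Matrix.mul_assoc, Matrix.mul_assoc, hQ', Matrix.mul_one]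
  set v := Qᵀ *ᵥ e
  have hxv : x *ᵥ (v - e) = 0 := by
    rw [mulVec_sub, mulVec_mulVec, hxQ, ← mulVec_mulVec, hx'e, hxe, mulVec_zero, sub_zero]
  have hvx : (v - e) ᵥ* x = 0 := by
    rw [← mulVec_transpose, hx, neg_mulVec, hxv, neg_zero]
  have hvv : v ⬝ᵥ v = e ⬝ᵥ e := by
    rw [dotProduct_mulVec, ← mulVec_transpose, transpose_transpose, mulVec_mulVec, hQ',
      one_mulVec]
  refine ⟨Q * householder (v - e), ?_, ?_, ?_⟩
  · rw [transpose_mul, transpose_householder, Matrix.mul_assoc, ← Matrix.mul_assoc Qᵀ, hQ,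
      Matrix.one_mul, householder_mul_self]
  · rw [Matrix.mul_assoc, householder_mul_comm hxv hvx, ← Matrix.mul_assoc, hQx,
      Matrix.mul_assoc]
  · rw [transpose_mul, transpose_householder, ← mulVec_mulVec, householder_sub_mulVec hvv]

end Matrix

theorem lorentzEta_eq_householder (n : ℕ) :
    lorentzEta n = householder (Pi.single (Fin.last n) 1) := by
  ext i j
  simp only [lorentzEta, householder, diagonal_apply, Matrix.sub_apply, one_apply,
    Matrix.smul_apply, vecMulVec_apply, Pi.single_apply, dotProduct_single, smul_eq_mul]
  split_ifs <;> grind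

/-- let `x, x̃ ∈ t = so(n) ⊕ so(1) ⊂ o(n,1)` lie in the compact part of
the Cartan decomposition (skew-symmetric with vanishing last row and column).  If `x`
and `x̃` lie in the same complex orthogonal (`O(n+1,ℂ)`) adjoint orbit, then they lie
in the same `O(n,1)`-adjoint orbit. -/
theorem lorentz_compact_part_same_orbit (n : ℕ)
    (x x' : Matrix (Fin (n + 1)) (Fin (n + 1)) ℝ)
    (hx : xᵀ = -x) (hx' : x'ᵀ = -x')
    (hxlast : ∀ i, x i (Fin.last n) = 0 ∧ x (Fin.last n) i = 0)
    (hx'last : ∀ i, x' i (Fin.last n) = 0 ∧ x' (Fin.last n) i = 0)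
    -- `x` and `x'` lie in the same complex orthogonal adjoint orbit
    (horb : ∃ g : Matrix (Fin (n + 1)) (Fin (n + 1)) ℂ,
      gᵀ * (lorentzEta n).map Complex.ofReal * g = (lorentzEta n).map Complex.ofReal ∧
      g * x.map Complex.ofReal * g⁻¹ = x'.map Complex.ofReal) :
    ∃ h : Matrix (Fin (n + 1)) (Fin (n + 1)) ℝ,
      hᵀ * lorentzEta n * h = lorentzEta n ∧ h * x * h⁻¹ = x' := by
  obtain ⟨g, hgη, hgx⟩ := horb
  set η := (lorentzEta n).map Complex.ofReal
  have hηη : η * η = 1 := by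
    change (lorentzEta n).map Complex.ofRealHom * (lorentzEta n).map Complex.ofRealHom = 1
    rw [← Matrix.map_mul, lorentzEta_eq_householder, householder_mul_self,
      Matrix.map_one _ (map_zero _) (map_one _)]
  have hg : IsUnit g.det := isUnit_det_of_left_inverse (B := η * gᵀ * η) <| by
    rw [Matrix.mul_assoc, Matrix.mul_assoc, ← Matrix.mul_assoc gᵀ, hgη, hηη]
  obtain ⟨S, hS, hSx⟩ := exists_real_conj_of_complex_conj (x := x) (x' := x') hg <| by
    rw [← hgx, nonsing_inv_mul_cancel_right _ _ hg]
  obtain ⟨Q, hQ, hQx⟩ := exists_orthogonal_conj_of_conj hx hx' hS hSx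
  have hlast {y : Matrix (Fin (n + 1)) (Fin (n + 1)) ℝ} (hy : ∀ i, y i (Fin.last n) = 0) :
      y *ᵥ Pi.single (Fin.last n) 1 = 0 := by
    rw [mulVec_single_one]
    exact funext hy
  obtain ⟨h, hh, hhx, hhe⟩ := exists_orthogonal_conj_fixing hx (hlast fun i => (hxlast i).1)
    (hlast fun i => (hx'last i).1) hQ hQx
  refine ⟨h, ?_, ?_⟩
  · rw [lorentzEta_eq_householder]
    exact transpose_mul_householder_mul hh hhe
  · rw [inv_eq_left_inv hh, hhx, Matrix.mul_assoc, mul_eq_one_comm.mp hh, Matrix.mul_one]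
end

section
/- For p, q ≥ 2 and n = p + q, there exists a minimal vector x ∈ o(p,q) (for the adjoint action) such that the closed complex orbit (Ad O(n,ℂ))x contains at least two disjoint real O(p,q)-orbits; explicitly, one may take x ∈ so(p) ⊕ so(q) ⊂ o(p,q) block-diagonal with two 2×2 rotation blocks with distinct characteristic polynomials placed in the so(p) and so(q) factors, and x₁ the same matrix with the two blocks interchanged: then x and x₁ are O(n)-conjugate but not O(p,q)-conjugate. -/
/-!
Take `x = diag(J, 2J)` and `x₁ = diag(2J, J)`, with the plane-rotation generators `J` placed in
the first coordinate planes of the two factors `ℝ^p` and `ℝ^q`. Swapping these two planes is an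
orthogonal change of coordinates carrying `x` to `x₁`.

An element of `O(p,q)` conjugating `x` to `x₁` would map the `-1`-eigenspace of `x²` to that of
`x₁²`, isometrically for the form `η = diag(1, -1)`. The first one contains the positive vector
`e₁ ∈ ℝ^p`; the second one lies in `ℝ^q`, where `η` is negative semidefinite.
-/

open Matrix

/-- The metric matrix of signature `(p,q)` on `ℝ^p ⊕ ℝ^q`. -/
noncomputable def etaPQ (p q : ℕ) : Matrix (Fin p ⊕ Fin q) (Fin p ⊕ Fin q) ℝ :=
  Matrix.fromBlocks 1 0 0 (-1)

namespace Matrix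

section PlaneRotation

variable {ι κ R : Type*} [DecidableEq ι] [DecidableEq κ] [CommRing R]

def planeRotation (i j : ι) (c : R) : Matrix ι ι R :=
  c • (single i j 1 - single j i 1)

variable (i j : ι) (c : R)

lemma transpose_planeRotation : (planeRotation i j c)ᵀ = -planeRotation i j c := by
  simp only [planeRotation, transpose_smul, transpose_sub, transpose_single]
  module

lemma submatrix_planeRotation (σ : κ ≃ ι) :
    (planeRotation i j c).submatrix σ σ = planeRotation (σ.symm i) (σ.symm j) c := by
  simp [planeRotation, submatrix_smul, submatrix_sub]

lemma fromBlocks_planeRotation {ι' : Type*} [DecidableEq ι'] (i' j' : ι') (d : R) :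
    fromBlocks (planeRotation i j c) 0 0 (planeRotation i' j' d) =
      planeRotation (.inl i) (.inl j) c + planeRotation (.inr i') (.inr j') d := by
  ext (k | k) (l | l) <;> simp [planeRotation, single_apply]

variable [Fintype ι] {i j}

lemma planeRotation_mul_self (hij : i ≠ j) :
    planeRotation i j c * planeRotation i j c = -c ^ 2 • (single i i 1 + single j j 1) := by
  simp only [planeRotation, smul_mul_smul, sub_mul, mul_sub, single_mul_single_same, mul_one]
  rw [single_mul_single_of_ne (h := hij), single_mul_single_of_ne (h := hij.symm), ← sq,
    zero_sub, sub_zero, neg_smul, ← smul_neg]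
  abel_nf

lemma planeRotation_mul_self_mulVec_single (hij : i ≠ j) (hc : c ^ 2 = 1) :
    (planeRotation i j c * planeRotation i j c) *ᵥ Pi.single i 1 = -Pi.single i 1 := by
  rw [planeRotation_mul_self c hij, hc]
  ext k
  simp [Pi.single_apply, single_apply, hij.symm, eq_comm]

end PlaneRotation

lemma eq_zero_of_smul_mulVec_eq_self {ι K : Type*} [Fintype ι] [Field K] {P : Matrix ι ι K}
    (hP : P * P = P) {a : K} (ha : a ≠ 1) {v : ι → K} (hv : (a • P) *ᵥ v = v) : v = 0 := by
  have hPv : P *ᵥ v = a • (P *ᵥ v) := by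
    conv_lhs => rw [← hv]
    rw [smul_mulVec, mulVec_smul, mulVec_mulVec, hP]
  replace hPv : (1 - a) • (P *ᵥ v) = 0 := by rw [sub_smul, one_smul, ← hPv, sub_self]
  rw [← hv, smul_mulVec, (smul_eq_zero.mp hPv).resolve_left (sub_ne_zero.mpr ha.symm), smul_zero]

lemma eq_zero_of_planeRotation_mul_self_mulVec_eq_neg {ι K : Type*} [Fintype ι] [DecidableEq ι]
    [Field K] {i j : ι} (hij : i ≠ j) {c : K} (hc : c ^ 2 ≠ 1) {v : ι → K}
    (hv : (planeRotation i j c * planeRotation i j c) *ᵥ v = -v) : v = 0 := by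
  refine eq_zero_of_smul_mulVec_eq_self (P := single i i 1 + single j j 1) ?_ hc ?_
  · simp [add_mul, mul_add, hij, hij.symm]
  · rw [planeRotation_mul_self c hij, neg_smul, neg_mulVec] at hv
    exact neg_injective hv

section Conjugation

variable {ι R : Type*} [Fintype ι] [CommRing R]

lemma transpose_permMatrix_mul_permMatrix [DecidableEq ι] (σ : Equiv.Perm ι) :
    (σ.permMatrix R)ᵀ * σ.permMatrix R = 1 := by
  rw [transpose_permMatrix, ← permMatrix_mul, mul_inv_cancel, permMatrix_one]

lemma permMatrix_mul_mul_inv_permMatrix [DecidableEq ι] (σ : Equiv.Perm ι) (M : Matrix ι ι R) :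
    σ.permMatrix R * M * (σ.permMatrix R)⁻¹ = M.submatrix σ σ := by
  rw [inv_eq_left_inv (transpose_permMatrix_mul_permMatrix σ), transpose_permMatrix,
    PEquiv.toMatrix_toPEquiv_mul, PEquiv.mul_toMatrix_toPEquiv]
  rfl

lemma exists_orthogonal_conj_fromBlocks_planeRotation_swap {m n : Type*} [Fintype m] [Fintype n]
    [DecidableEq m] [DecidableEq n] {i i' : m} {j j' : n} (hi : i ≠ i') (hj : j ≠ j') (c d : R) :
    ∃ g : Matrix (m ⊕ n) (m ⊕ n) R, gᵀ * g = 1 ∧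
      g * fromBlocks (planeRotation i i' c) 0 0 (planeRotation j j' d) * g⁻¹ =
        fromBlocks (planeRotation i i' d) 0 0 (planeRotation j j' c) := by
  let σ : Equiv.Perm (m ⊕ n) := Equiv.swap (.inl i) (.inr j) * Equiv.swap (.inl i') (.inr j')
  refine ⟨σ.permMatrix R, transpose_permMatrix_mul_permMatrix σ, ?_⟩
  rw [permMatrix_mul_mul_inv_permMatrix, fromBlocks_planeRotation, fromBlocks_planeRotation,
    submatrix_add, Pi.add_apply, Pi.add_apply, submatrix_planeRotation, submatrix_planeRotation,
    add_comm]
  simp [σ, Equiv.Perm.mul_def, Equiv.swap_apply_of_ne_of_ne, hi, hj, hi.symm, hj.symm]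

variable {η h : Matrix ι ι R}

lemma nonsing_inv_mul_of_transpose_mul_mul_eq [DecidableEq ι] (hη : η * η = 1)
    (hh : hᵀ * η * h = η) : h⁻¹ * h = 1 := by
  have hleft : (η * hᵀ * η) * h = 1 := by rw [mul_assoc η, mul_assoc, hh, hη]
  rw [inv_eq_left_inv hleft, hleft]

lemma dotProduct_mulVec_of_transpose_mul_mul_eq (hh : hᵀ * η * h = η) (v : ι → R) :
    (h *ᵥ v) ⬝ᵥ (η *ᵥ (h *ᵥ v)) = v ⬝ᵥ (η *ᵥ v) := by
  rw [mulVec_mulVec, ← vecMul_transpose, ← dotProduct_mulVec, mulVec_mulVec, ← mul_assoc, hh]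

end Conjugation

end Matrix

lemma etaPQ_mul_self (p q : ℕ) : etaPQ p q * etaPQ p q = 1 := by
  simp [etaPQ, fromBlocks_multiply, ← fromBlocks_one]

lemma etaPQ_mul_fromBlocks_mul_etaPQ {p q : ℕ} (a : Matrix (Fin p) (Fin p) ℝ)
    (b : Matrix (Fin q) (Fin q) ℝ) :
    etaPQ p q * fromBlocks a 0 0 b * etaPQ p q = fromBlocks a 0 0 b := by
  simp [etaPQ, fromBlocks_multiply]

lemma dotProduct_etaPQ_mulVec {p q : ℕ} (w : Fin p ⊕ Fin q → ℝ) :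
    w ⬝ᵥ (etaPQ p q *ᵥ w) = (w ∘ .inl) ⬝ᵥ (w ∘ .inl) - (w ∘ .inr) ⬝ᵥ (w ∘ .inr) := by
  simp [etaPQ, fromBlocks_mulVec, dotProduct, Fintype.sum_sum_type, neg_mulVec, sub_eq_add_neg]

theorem fromBlocks_conj_ne_of_isometry {p q : ℕ} {a a₁ : Matrix (Fin p) (Fin p) ℝ}
    (b b₁ : Matrix (Fin q) (Fin q) ℝ) {u : Fin p → ℝ} (hu : u ≠ 0) (hau : (a * a) *ᵥ u = -u)
    (ha₁ : ∀ v, (a₁ * a₁) *ᵥ v = -v → v = 0) {h : Matrix (Fin p ⊕ Fin q) (Fin p ⊕ Fin q) ℝ}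
    (hh : hᵀ * etaPQ p q * h = etaPQ p q) :
    h * fromBlocks a 0 0 b * h⁻¹ ≠ fromBlocks a₁ 0 0 b₁ := by
  set x := fromBlocks a 0 0 b
  set y := fromBlocks a₁ 0 0 b₁
  intro hconj
  have hyh : y * h = h * x := by
    rw [← hconj, mul_assoc, nonsing_inv_mul_of_transpose_mul_mul_eq (etaPQ_mul_self p q) hh,
      mul_one]
  let e : Fin p ⊕ Fin q → ℝ := Sum.elim u 0
  have he : (x * x) *ᵥ e = -e := by
    ext (k | k) <;> simp [x, e, fromBlocks_multiply, fromBlocks_mulVec, hau]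
  let w := h *ᵥ e
  have hw : (y * y) *ᵥ w = -w := by
    rw [mulVec_mulVec, mul_assoc, hyh, ← mul_assoc, hyh, mul_assoc, ← mulVec_mulVec, he,
      mulVec_neg]
  have hw_inl : w ∘ Sum.inl = 0 := by
    refine ha₁ _ ?_
    have := congrArg (· ∘ Sum.inl) hw
    simpa [y, fromBlocks_multiply, fromBlocks_mulVec, Pi.neg_comp] using this
  have hform := dotProduct_mulVec_of_transpose_mul_mul_eq hh e
  rw [dotProduct_etaPQ_mulVec, dotProduct_etaPQ_mulVec, hw_inl] at hform
  simp only [dotProduct_zero, zero_sub, Sum.elim_comp_inl, Sum.elim_comp_inr, sub_zero,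
    e] at hform
  have hu_pos : 0 < u ⬝ᵥ u := lt_of_le_of_ne (Finset.sum_nonneg fun i _ => mul_self_nonneg (u i))
    (Ne.symm (dotProduct_self_eq_zero.not.mpr hu))
  have hw_nonneg : 0 ≤ (w ∘ Sum.inr) ⬝ᵥ (w ∘ Sum.inr) :=
    Finset.sum_nonneg fun i _ => mul_self_nonneg _
  linarith

/-- for `p, q ≥ 2` there is a minimal vector `x ∈ so(p) ⊕ so(q) ⊂ o(p,q)`
(block diagonal, skew-symmetric, commuting with `θ(x) = η x η`) whose closed complex
orbit contains at least two disjoint real `O(p,q)`-orbits: there is another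
`x₁ ∈ so(p) ⊕ so(q)` which is `O(n)`-conjugate to `x` (`n = p + q`) but not
`O(p,q)`-conjugate to `x`. -/
theorem opq_two_disjoint_real_orbits (p q : ℕ) (hp : 2 ≤ p) (hq : 2 ≤ q) :
    ∃ a : Matrix (Fin p) (Fin p) ℝ, ∃ b : Matrix (Fin q) (Fin q) ℝ,
    ∃ a₁ : Matrix (Fin p) (Fin p) ℝ, ∃ b₁ : Matrix (Fin q) (Fin q) ℝ,
      aᵀ = -a ∧ bᵀ = -b ∧ a₁ᵀ = -a₁ ∧ b₁ᵀ = -b₁ ∧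
      -- `x = fromBlocks a 0 0 b` is a minimal vector: `[x, θ(x)] = 0`
      (Matrix.fromBlocks a 0 0 b) *
          (etaPQ p q * Matrix.fromBlocks a 0 0 b * etaPQ p q) =
        (etaPQ p q * Matrix.fromBlocks a 0 0 b * etaPQ p q) *
          (Matrix.fromBlocks a 0 0 b) ∧
      -- `x` and `x₁` are `O(n)`-conjugate
      (∃ g : Matrix (Fin p ⊕ Fin q) (Fin p ⊕ Fin q) ℝ, gᵀ * g = 1 ∧
        g * Matrix.fromBlocks a 0 0 b * g⁻¹ = Matrix.fromBlocks a₁ 0 0 b₁) ∧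
      -- but `x` and `x₁` are not `O(p,q)`-conjugate
      ¬(∃ h : Matrix (Fin p ⊕ Fin q) (Fin p ⊕ Fin q) ℝ,
          hᵀ * etaPQ p q * h = etaPQ p q ∧
          h * Matrix.fromBlocks a 0 0 b * h⁻¹ = Matrix.fromBlocks a₁ 0 0 b₁) := by
  have hi : (⟨0, by omega⟩ : Fin p) ≠ ⟨1, by omega⟩ := by simp
  have hj : (⟨0, by omega⟩ : Fin q) ≠ ⟨1, by omega⟩ := by simp
  refine ⟨planeRotation _ _ 1, planeRotation _ _ 2, planeRotation _ _ 2, planeRotation _ _ 1,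
    transpose_planeRotation .., transpose_planeRotation .., transpose_planeRotation ..,
    transpose_planeRotation .., by rw [etaPQ_mul_fromBlocks_mul_etaPQ],
    exists_orthogonal_conj_fromBlocks_planeRotation_swap hi hj 1 2, ?_⟩
  rintro ⟨h, hh, hconj⟩
  exact fromBlocks_conj_ne_of_isometry _ _ (Pi.single_ne_zero_iff.mpr one_ne_zero)
    (planeRotation_mul_self_mulVec_single 1 hi (one_pow 2))
    (fun v hv => eq_zero_of_planeRotation_mul_self_mulVec_eq_neg hi (by norm_num) hv) hh hconj
end
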